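/- arXiv:2307.01374 — 7 statements merged into one kernel-verified Lean document; each statement's English description precedes it below -/
import Mathlib

section
/- If F is an n-uniform set family with |F| > n!(r-1)^n, then F contains an r-sunflower. -/
open Finset

def HasSunflower {α : Type*} [DecidableEq α] (F : Finset (Finset α)) (r : ℕ) : Prop :=
  ∃ P ⊆ F, P.card = r ∧ ∃ K : Finset α, ∀ A ∈ P, ∀ B ∈ P, A ≠ B → A ∩ B = K

/-- Erdős–Rado sunflower lemma. -/
theorem erdos_rado {α : Type*} [DecidableEq α] (n r : ℕ)
    (F : Finset (Finset α)) (huniform : ∀ A ∈ F, A.card = n)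
    (hcard : F.card > n.factorial * (r - 1) ^ n) :
    HasSunflower F r := by
  induction n generalizing F with
  | zero =>
    exfalso
    have h1 : F ⊆ {∅} := fun A hA => by
      simp [Finset.card_eq_zero.mp (huniform A hA)]
    have h2 := Finset.card_le_card h1
    simp only [Finset.card_singleton] at h2
    simp at hcard
    omega
  | succ n ih =>
    rcases Nat.eq_zero_or_pos r with hr | hr
    · exact ⟨∅, empty_subset F, by simp [hr], ∅, by simp⟩
    -- choose a pairwise-disjoint subfamily S of maximal cardinality
    classical
    set D : Finset (Finset (Finset α)) :=
      F.powerset.filter (fun S => (S : Set (Finset α)).PairwiseDisjoint id) with hD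
    have hDne : D.Nonempty := ⟨∅, by simp [hD]⟩
    obtain ⟨S, hSD, hSmax⟩ := D.exists_max_image Finset.card hDne
    have hSF : S ⊆ F := by
      have := (Finset.mem_filter.mp hSD).1; exact Finset.mem_powerset.mp this
    have hSdisj : (S : Set (Finset α)).PairwiseDisjoint id :=
      (Finset.mem_filter.mp hSD).2
    set X : Finset α := S.biUnion id with hX
    -- maximality: every A ∈ F meets X
    have hmax : ∀ A ∈ F, (A ∩ X).Nonempty := by
      intro A hA
      by_contra hcon
      rw [Finset.not_nonempty_iff_eq_empty] at hcon
      have hAnotS : A ∉ S := by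
        intro hAS
        have hAX : A ⊆ X := fun a ha => Finset.mem_biUnion.mpr ⟨A, hAS, ha⟩
        have : A ∩ X = A := Finset.inter_eq_left.mpr hAX
        rw [this] at hcon
        have := huniform A hA
        simp [hcon] at this
      have hdisjall : ∀ B ∈ S, Disjoint A B := by
        intro B hB
        rw [Finset.disjoint_iff_inter_eq_empty]
        have hBX : B ⊆ X := fun a ha => Finset.mem_biUnion.mpr ⟨B, hB, ha⟩
        have : A ∩ B ⊆ A ∩ X := Finset.inter_subset_inter_left hBX
        rw [hcon] at this
        exact Finset.subset_empty.mp this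
      have hins : insert A S ∈ D := by
        rw [hD, Finset.mem_filter, Finset.mem_powerset]
        constructor
        · exact Finset.insert_subset hA hSF
        · rw [Finset.coe_insert]
          refine Set.PairwiseDisjoint.insert hSdisj ?_
          intro B hB _
          exact hdisjall B hB
      have := hSmax _ hins
      rw [Finset.card_insert_of_notMem hAnotS] at this
      omega
    by_cases hSr : r ≤ S.card
    · -- S itself contains an r-sunflower with empty core
      obtain ⟨P, hPS, hPcard⟩ := Finset.exists_subset_card_eq hSr
      refine ⟨P, hPS.trans hSF, hPcard, ∅, ?_⟩
      intro A hA B hB hAB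
      rw [← Finset.disjoint_iff_inter_eq_empty]
      exact hSdisj (hPS hA) (hPS hB) hAB
    · push_neg at hSr
      have hScard : S.card ≤ r - 1 := by omega
      have hXcard : X.card ≤ (r - 1) * (n + 1) := by
        calc X.card ≤ ∑ B ∈ S, (id B).card := Finset.card_biUnion_le
          _ = ∑ B ∈ S, (n + 1) := by
              refine Finset.sum_congr rfl fun B hB => huniform B (hSF hB)
          _ = S.card * (n + 1) := by rw [Finset.sum_const, smul_eq_mul]
          _ ≤ (r - 1) * (n + 1) := Nat.mul_le_mul_right _ hScard
      -- counting
      have key : F.card ≤ ∑ x ∈ X, (F.filter (fun A => x ∈ A)).card := by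
        calc F.card = ∑ _A ∈ F, 1 := by simp
          _ ≤ ∑ A ∈ F, (A ∩ X).card :=
              Finset.sum_le_sum fun A hA => Finset.card_pos.mpr (hmax A hA)
          _ = ∑ A ∈ F, ∑ x ∈ X, if x ∈ A then 1 else 0 := by
              refine Finset.sum_congr rfl fun A _ => ?_
              rw [Finset.inter_comm, ← Finset.filter_mem_eq_inter, Finset.card_filter]
          _ = ∑ x ∈ X, ∑ A ∈ F, if x ∈ A then 1 else 0 := Finset.sum_comm
          _ = ∑ x ∈ X, (F.filter (fun A => x ∈ A)).card := by
              refine Finset.sum_congr rfl fun x _ => ?_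
              rw [Finset.card_filter]
      -- pigeonhole
      have hex : ∃ x ∈ X, n.factorial * (r - 1) ^ n < (F.filter (fun A => x ∈ A)).card := by
        by_contra hcon
        push_neg at hcon
        have hsum : ∑ x ∈ X, (F.filter (fun A => x ∈ A)).card
            ≤ X.card * (n.factorial * (r - 1) ^ n) := by
          calc ∑ x ∈ X, (F.filter (fun A => x ∈ A)).card
              ≤ ∑ _x ∈ X, n.factorial * (r - 1) ^ n :=
                Finset.sum_le_sum fun x hx => hcon x hx
            _ = X.card * (n.factorial * (r - 1) ^ n) := by
                rw [Finset.sum_const, smul_eq_mul]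
        have hle : X.card * (n.factorial * (r - 1) ^ n)
            ≤ (n + 1).factorial * (r - 1) ^ (n + 1) := by
          calc X.card * (n.factorial * (r - 1) ^ n)
              ≤ ((r - 1) * (n + 1)) * (n.factorial * (r - 1) ^ n) :=
                Nat.mul_le_mul_right _ hXcard
            _ = (n + 1).factorial * (r - 1) ^ (n + 1) := by
                rw [Nat.factorial_succ]; ring
        omega
      obtain ⟨x, _hxX, hx⟩ := hex
      set Fx := F.filter (fun A => x ∈ A) with hFx
      have hmemx : ∀ A ∈ Fx, x ∈ A := fun A hA => (Finset.mem_filter.mp hA).2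
      set G : Finset (Finset α) := Fx.image (fun A => A.erase x) with hG
      have hGcard : G.card = Fx.card := by
        rw [hG]
        apply Finset.card_image_of_injOn
        intro A hA B hB hAB
        have := congrArg (insert x) hAB
        rwa [Finset.insert_erase (hmemx A hA), Finset.insert_erase (hmemx B hB)] at this
      have hGuniform : ∀ B ∈ G, B.card = n := by
        intro B hB
        obtain ⟨A, hA, rfl⟩ := Finset.mem_image.mp hB
        have hAcard := huniform A (Finset.mem_filter.mp hA).1
        rw [Finset.card_erase_of_mem (hmemx A hA), hAcard]
        omega
      have hGbig : G.card > n.factorial * (r - 1) ^ n := by rw [hGcard]; exact hx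
      obtain ⟨P, hPG, hPcard, K, hK⟩ := ih G hGuniform hGbig
      -- lift back
      have hxnotin : ∀ B ∈ P, x ∉ B := by
        intro B hB
        obtain ⟨A, _, rfl⟩ := Finset.mem_image.mp (hPG hB)
        exact Finset.notMem_erase x A
      refine ⟨P.image (insert x), ?_, ?_, insert x K, ?_⟩
      · intro C hC
        obtain ⟨B, hB, rfl⟩ := Finset.mem_image.mp hC
        obtain ⟨A, hA, rfl⟩ := Finset.mem_image.mp (hPG hB)
        rw [Finset.insert_erase (hmemx A hA)]
        exact (Finset.mem_filter.mp hA).1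
      · rw [Finset.card_image_of_injOn, hPcard]
        intro B hB B' hB' hBB'
        have := congrArg (Finset.erase · x) hBB'
        simpa [Finset.erase_insert (hxnotin B hB), Finset.erase_insert (hxnotin B' hB')]
          using this
      · intro C hC D hD hCD
        obtain ⟨B, hB, rfl⟩ := Finset.mem_image.mp hC
        obtain ⟨B', hB', rfl⟩ := Finset.mem_image.mp hD
        have hBB' : B ≠ B' := fun h => hCD (by rw [h])
        rw [← hK B hB B' hB' hBB']
        ext a
        simp only [Finset.mem_inter, Finset.mem_insert]
        tauto
end

section
/- Let F be an n-uniform set family such that there exists t with 0 ≤ t < n and |F_i ∩ F_j| = t for all distinct F_i, F_j ∈ F. If |F| ≥ n² - n + 2, then F is a sunflower, i.e., all pairwise intersections equal the common intersection of all sets in F. -/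
set_option maxHeartbeats 1000000

open Finset

private lemma deza_gram {α : Type*} [DecidableEq α] {n t : ℕ} {F : Finset (Finset α)}
    (huniform : ∀ A ∈ F, A.card = n)
    (hint : ∀ A ∈ F, ∀ B ∈ F, A ≠ B → (A ∩ B).card = t)
    (w : Finset α → ℤ) :
    ∑ y ∈ F.sup id, (∑ B ∈ F.filter fun B => y ∈ B, w B) ^ 2
      = ((n : ℤ) - t) * (∑ B ∈ F, (w B)^2) + t * (∑ B ∈ F, w B)^2 := by
  classical
  have hBU : ∀ B ∈ F, B ⊆ F.sup id := fun B hB => Finset.le_sup (f := id) hB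
  have hinner : ∀ B ∈ F, ∀ B' ∈ F,
      (∑ y ∈ F.sup id, (if y ∈ B then w B else 0) * (if y ∈ B' then w B' else 0))
        = ((B ∩ B').card : ℤ) * (w B * w B') := by
    intro B hB B' hB'
    have h1 : ∀ y, (if y ∈ B then w B else 0) * (if y ∈ B' then w B' else 0)
        = if y ∈ B ∩ B' then w B * w B' else 0 := by
      intro y
      by_cases h1 : y ∈ B <;> by_cases h2 : y ∈ B' <;> simp [h1, h2, Finset.mem_inter]
    rw [Finset.sum_congr rfl fun y _ => h1 y, Finset.sum_ite_mem,
      Finset.inter_eq_right.2 ((Finset.inter_subset_left).trans (hBU B hB)),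
      Finset.sum_const, nsmul_eq_mul]
  have e2 : ∀ B ∈ F, ∀ B' ∈ F, ((B ∩ B').card : ℤ)
      = t + (if B' = B then ((n : ℤ) - t) else 0) := by
    intro B hB B' hB'
    by_cases h : B' = B
    · subst h
      rw [Finset.inter_self, huniform B' hB, if_pos rfl]
      ring
    · rw [hint B hB B' hB' (fun hEq => h hEq.symm), if_neg h, add_zero]
  calc ∑ y ∈ F.sup id, (∑ B ∈ F.filter fun B => y ∈ B, w B) ^ 2
      = ∑ y ∈ F.sup id, ∑ B ∈ F, ∑ B' ∈ F,
          (if y ∈ B then w B else 0) * (if y ∈ B' then w B' else 0) := by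
        refine Finset.sum_congr rfl fun y _ => ?_
        rw [Finset.sum_filter, sq, Finset.sum_mul_sum]
    _ = ∑ B ∈ F, ∑ B' ∈ F, ∑ y ∈ F.sup id,
          (if y ∈ B then w B else 0) * (if y ∈ B' then w B' else 0) := by
        rw [Finset.sum_comm]
        exact Finset.sum_congr rfl fun B _ => Finset.sum_comm
    _ = ∑ B ∈ F, ∑ B' ∈ F, ((B ∩ B').card : ℤ) * (w B * w B') :=
        Finset.sum_congr rfl fun B hB => Finset.sum_congr rfl fun B' hB' => hinner B hB B' hB'
    _ = ∑ B ∈ F, ∑ B' ∈ F, ((t : ℤ) * (w B * w B')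
          + (if B' = B then ((n : ℤ) - t) * (w B * w B') else 0)) := by
        refine Finset.sum_congr rfl fun B hB => Finset.sum_congr rfl fun B' hB' => ?_
        rw [e2 B hB B' hB']
        by_cases h : B' = B
        · rw [if_pos h, if_pos h]
          ring
        · rw [if_neg h, if_neg h]
          ring
    _ = ∑ B ∈ F, ((t : ℤ) * (w B * ∑ B' ∈ F, w B') + ((n : ℤ) - t) * (w B)^2) := by
        refine Finset.sum_congr rfl fun B hB => ?_
        rw [Finset.sum_add_distrib, Finset.sum_ite_eq' F B (fun B' => ((n:ℤ) - t) * (w B * w B')),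
          if_pos hB, ← Finset.mul_sum, ← Finset.mul_sum]
        ring
    _ = ((n : ℤ) - t) * (∑ B ∈ F, (w B)^2) + t * (∑ B ∈ F, w B)^2 := by
        rw [Finset.sum_add_distrib, ← Finset.mul_sum, ← Finset.mul_sum, ← Finset.sum_mul, sq]
        ring

private lemma deza_spectral {α : Type*} [DecidableEq α] {n t : ℕ} {F : Finset (Finset α)}
    (huniform : ∀ A ∈ F, A.card = n)
    (hint : ∀ A ∈ F, ∀ B ∈ F, A ≠ B → (A ∩ B).card = t)
    (htn : t < n) (x : α) (hx : ∃ B ∈ F, x ∈ B) :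
    0 ≤ (t : ℤ) * ((F.filter fun B => x ∈ B).card : ℤ) ^ 2
        - (((n : ℤ) - t) + t * F.card) * ((F.filter fun B => x ∈ B).card : ℤ)
        + ((n : ℤ) - t) * (((n : ℤ) - t) + t * F.card) := by
  classical
  obtain ⟨B₀, hB₀, hxB₀⟩ := hx
  set m : ℕ := F.card with hm
  set dn : ℕ := (F.filter fun B => x ∈ B).card with hdn
  have hdm : dn ≤ m := Finset.card_filter_le F _
  have hd1 : 1 ≤ dn := Finset.card_pos.2 ⟨B₀, Finset.mem_filter.2 ⟨hB₀, hxB₀⟩⟩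
  set N : ℤ := (n : ℤ) with hN
  set T : ℤ := (t : ℤ) with hT
  set M : ℤ := (m : ℤ) with hM
  set D : ℤ := (dn : ℤ) with hD
  set S : ℤ := (N - T) + T * M with hS
  have hgram := deza_gram huniform hint
    (fun B => S * (if x ∈ B then 1 else 0) - T * D)
  set w : Finset α → ℤ := fun B => S * (if x ∈ B then 1 else 0) - T * D with hw
  -- the x-term of the left side
  have hxU : x ∈ F.sup id := Finset.mem_sup.2 ⟨B₀, hB₀, hxB₀⟩
  have hsingle : (∑ B ∈ F.filter fun B => x ∈ B, w B)^2
      ≤ ∑ y ∈ F.sup id, (∑ B ∈ F.filter fun B => y ∈ B, w B) ^ 2 :=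
    Finset.single_le_sum (f := fun y => (∑ B ∈ F.filter fun B => y ∈ B, w B)^2)
      (fun y _ => sq_nonneg _) hxU
  have hex : ∑ B ∈ F.filter (fun B => x ∈ B), w B = D * (S - T * D) := by
    have h1 : ∀ B ∈ F.filter (fun B => x ∈ B), w B = S - T * D := by
      intro B hB
      have hxB : x ∈ B := (Finset.mem_filter.1 hB).2
      simp [hw, hxB]
    rw [Finset.sum_congr rfl h1, Finset.sum_const, ← hdn, nsmul_eq_mul, ← hD]
  have hcnt : ∑ B ∈ F, (if x ∈ B then (1:ℤ) else 0) = D := by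
    rw [Finset.sum_boole, ← hdn, hD]
  have hWsum : ∑ B ∈ F, w B = D * (N - T) := by
    have h1 : ∑ B ∈ F, w B = S * (∑ B ∈ F, (if x ∈ B then (1:ℤ) else 0)) - (m : ℤ) * (T * D) := by
      rw [Finset.sum_sub_distrib, ← Finset.mul_sum, Finset.sum_const, nsmul_eq_mul, ← hm]
    rw [h1, hcnt, ← hM, hS]
    ring
  have hcompl : dn + (F.filter fun B => ¬ x ∈ B).card = m := by
    rw [hdn, hm]
    exact Finset.card_filter_add_card_filter_not _
  have hW2sum : ∑ B ∈ F, (w B)^2 = D * (S - T*D)^2 + (M - D) * (T*D)^2 := by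
    rw [← Finset.sum_filter_add_sum_filter_not F (fun B => x ∈ B)]
    have e1 : ∀ B ∈ F.filter (fun B => x ∈ B), (w B)^2 = (S - T*D)^2 := by
      intro B hB
      have hxB : x ∈ B := (Finset.mem_filter.1 hB).2
      simp [hw, hxB]
    have e2 : ∀ B ∈ F.filter (fun B => ¬ x ∈ B), (w B)^2 = (T*D)^2 := by
      intro B hB
      have hxB : ¬ x ∈ B := (Finset.mem_filter.1 hB).2
      simp [hw, hxB]
    have e3 : ((F.filter fun B => ¬ x ∈ B).card : ℤ) = M - D := by
      rw [hM, hD]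
      omega
    rw [Finset.sum_congr rfl e1, Finset.sum_congr rfl e2, Finset.sum_const, Finset.sum_const,
      nsmul_eq_mul, nsmul_eq_mul, ← hdn, ← hD, e3]
  -- assemble
  have hineq : (D * (S - T*D))^2
      ≤ (N - T) * (D * (S - T*D)^2 + (M - D)*(T*D)^2) + T * (D*(N-T))^2 := by
    calc (D * (S - T*D))^2 = (∑ B ∈ F.filter fun B => x ∈ B, w B)^2 := by rw [hex]
      _ ≤ ∑ y ∈ F.sup id, (∑ B ∈ F.filter fun B => y ∈ B, w B) ^ 2 := hsingle
      _ = (N - T) * (∑ B ∈ F, (w B)^2) + T * (∑ B ∈ F, w B)^2 := hgram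
      _ = (N - T) * (D * (S - T*D)^2 + (M - D)*(T*D)^2) + T * (D*(N-T))^2 := by
          rw [hW2sum, hWsum]
  have hrhs : (N - T) * (D * (S - T*D)^2 + (M - D)*(T*D)^2) + T * (D*(N-T))^2
      = ((N-T)*S) * (D * (S - T*D)) := by
    rw [hS]
    ring
  have hP : 0 < D * (S - T*D) := by
    have h1 : (0:ℤ) < D := by
      rw [hD]
      exact_mod_cast hd1
    have h2 : 0 < S - T*D := by
      have hDM : D ≤ M := by rw [hD, hM]; exact_mod_cast hdm
      have hTN : T < N := by rw [hT, hN]; exact_mod_cast htn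
      have hT0 : 0 ≤ T := by rw [hT]; positivity
      nlinarith [mul_nonneg hT0 (sub_nonneg.2 hDM)]
    exact mul_pos h1 h2
  have hkey : (D * (S - T*D)) * (D * (S - T*D)) ≤ ((N-T)*S) * (D * (S - T*D)) := by
    calc (D * (S - T*D)) * (D * (S - T*D)) = (D * (S - T*D))^2 := (sq _).symm
      _ ≤ (N - T) * (D * (S - T*D)^2 + (M - D)*(T*D)^2) + T * (D*(N-T))^2 := hineq
      _ = ((N-T)*S) * (D * (S - T*D)) := hrhs
  have hfin : D * (S - T*D) ≤ (N-T)*S := le_of_mul_le_mul_right hkey hP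
  have hgoal : T * D^2 - S * D + (N - T) * S = (N-T)*S - D * (S - T*D) := by ring
  linarith [hfin]

private lemma deza_endpoint (T N M : ℤ) (hT : 1 ≤ T) (hTN : T + 1 ≤ N) (hM : N^2 - N + 2 ≤ M) :
    (N - T) * ((T - 1) * M + 2 * N - T - 1) < T * (N - 1) * (M - N + 1) := by
  have hu : (0:ℤ) ≤ T - 1 := by linarith
  have hv : (0:ℤ) ≤ N - 1 - T := by linarith
  have hE : (0:ℤ) ≤ M - (N^2 - N + 2) := by linarith
  nlinarith [mul_nonneg hu hv, mul_nonneg hu hE, mul_nonneg hv hE,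
    mul_nonneg hu hu, mul_nonneg hv hv,
    mul_nonneg (mul_nonneg hu hu) hu, mul_nonneg (mul_nonneg hv hv) hv,
    mul_nonneg (mul_nonneg hu hu) hv, mul_nonneg (mul_nonneg hu hv) hv,
    mul_nonneg (mul_nonneg hu hu) hE, mul_nonneg (mul_nonneg hu hu) (mul_nonneg hv hv),
    mul_nonneg (mul_nonneg (mul_nonneg hu hu) hu) hv,
    mul_nonneg (mul_nonneg hu hu) (mul_nonneg hu hu)]

private lemma deza_convex (T S C a b dd : ℤ) (hT : 0 ≤ T) (hab : a < b)
    (hqa : T * a^2 - S * a + C < 0) (hqb : T * b^2 - S * b + C < 0)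
    (had : a ≤ dd) (hdb : dd ≤ b) (hq : 0 ≤ T * dd^2 - S * dd + C) : False := by
  have e1 : (0:ℤ) ≤ b - dd := by linarith
  have e2 : (0:ℤ) ≤ dd - a := by linarith
  have key : (T * dd^2 - S * dd + C) * (b - a)
      = (T * a^2 - S * a + C) * (b - dd) + (T * b^2 - S * b + C) * (dd - a)
        - T * (b - dd) * (dd - a) * (b - a) := by ring
  have h5 : T * a^2 - S * a + C ≤ -1 := by linarith
  have h6 : T * b^2 - S * b + C ≤ -1 := by linarith
  have h7 := mul_le_mul_of_nonneg_right h5 e1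
  have h8 := mul_le_mul_of_nonneg_right h6 e2
  have h3 : 0 ≤ T * (b - dd) * (dd - a) * (b - a) :=
    mul_nonneg (mul_nonneg (mul_nonneg hT e1) e2) (by linarith)
  have h4 : 0 ≤ (T * dd^2 - S * dd + C) * (b - a) := mul_nonneg hq (by linarith)
  linarith

private lemma deza_aux {α : Type*} [DecidableEq α] (n t : ℕ) (F : Finset (Finset α))
    (huniform : ∀ A ∈ F, A.card = n) (ht1 : 1 ≤ t) (ht : t < n)
    (hint : ∀ A ∈ F, ∀ B ∈ F, A ≠ B → (A ∩ B).card = t)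
    (havoid : ∀ x : α, ∃ C ∈ F, x ∉ C)
    (hcard : F.card ≥ n ^ 2 - n + 2) : False := by
  classical
  set m : ℕ := F.card with hm
  have hn2 : 2 ≤ n := by omega
  have hnn : n ≤ n ^ 2 := Nat.le_self_pow two_ne_zero n
  have hm2 : 2 ≤ m := le_trans (Nat.le_add_left 2 _) hcard
  set N : ℤ := (n : ℤ) with hN
  set T : ℤ := (t : ℤ) with hT
  set M : ℤ := (m : ℤ) with hM
  set S : ℤ := (N - T) + T * M with hS
  have hmZ : N ^ 2 - N + 2 ≤ M := by
    rw [hN, hM]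
    have h := hcard
    zify [hnn] at h
    exact_mod_cast h
  have hT1 : 1 ≤ T := by rw [hT]; exact_mod_cast ht1
  have hTN : T + 1 ≤ N := by rw [hT, hN]; exact_mod_cast ht
  have hN2 : 2 ≤ N := by rw [hN]; exact_mod_cast hn2
  have hMN : N ≤ M := by nlinarith [sq_nonneg (N - 1)]
  -- degree function
  set d : α → ℕ := fun x => (F.filter fun B => x ∈ B).card with hdd
  have hdm : ∀ x, d x < m := by
    intro x
    obtain ⟨C, hC, hxC⟩ := havoid x
    exact Finset.card_lt_card (Finset.filter_ssubset.2 ⟨C, hC, hxC⟩)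
  -- degree sum over a member
  have hsum : ∀ A ∈ F, ∑ x ∈ A, (d x : ℤ) = N + T * (M - 1) := by
    intro A hA
    have h1 : ∑ x ∈ A, d x = ∑ B ∈ F, (A ∩ B).card := by
      calc ∑ x ∈ A, d x = ∑ x ∈ A, ∑ B ∈ F, (if x ∈ B then 1 else 0) := by
            refine Finset.sum_congr rfl fun x _ => ?_
            rw [hdd]
            exact Finset.card_filter _ _
        _ = ∑ B ∈ F, ∑ x ∈ A, (if x ∈ B then 1 else 0) := Finset.sum_comm
        _ = ∑ B ∈ F, (A ∩ B).card := by
            refine Finset.sum_congr rfl fun B _ => ?_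
            rw [← Finset.card_filter]
            congr 1
    have h2 : ∑ B ∈ F, (A ∩ B).card = n + (m - 1) * t := by
      rw [← Finset.add_sum_erase F _ hA]
      congr 1
      · rw [Finset.inter_self, huniform A hA]
      · rw [Finset.sum_congr rfl (fun B hB =>
            hint A hA B (Finset.mem_of_mem_erase hB) (Ne.symm (Finset.ne_of_mem_erase hB))),
          Finset.sum_const, smul_eq_mul, Finset.card_erase_of_mem hA, hm]
    have h3 : ∑ x ∈ A, (d x : ℤ) = ((n + (m - 1) * t : ℕ) : ℤ) := by
      rw [← h2, ← h1]
      exact (Nat.cast_sum _ _).symm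
    have hm1 : 1 ≤ m := by omega
    rw [h3, hN, hT, hM]
    push_cast [Nat.cast_sub hm1]
    ring
  -- spectral bound
  have hq : ∀ x : α, (∃ B ∈ F, x ∈ B) → 0 ≤ T * (d x : ℤ)^2 - S * (d x : ℤ) + (N - T) * S :=
    fun x hx => deza_spectral huniform hint ht x hx
  -- endpoints of the forbidden interval
  have hqn : T * N^2 - S * N + (N - T) * S < 0 := by
    have hrw : T * N^2 - S * N + (N - T) * S = T * (N^2 - N + T - T * M) := by rw [hS]; ring
    have hX : N^2 - N + T - T * M ≤ -1 := by
      nlinarith [mul_le_mul_of_nonneg_left hmZ (by linarith : (0:ℤ) ≤ T),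
        mul_nonneg (by linarith : (0:ℤ) ≤ T - 1) (by nlinarith : (0:ℤ) ≤ N^2 - N)]
    rw [hrw]
    nlinarith [mul_le_mul_of_nonneg_left hX (by linarith : (0:ℤ) ≤ T)]
  have hqb : T * (M - N + 1)^2 - S * (M - N + 1) + (N - T) * S < 0 := by
    have hrw : T * (M - N + 1)^2 - S * (M - N + 1) + (N - T) * S
        = (N - T) * ((T - 1) * M + 2 * N - T - 1) - T * (N - 1) * (M - N + 1) := by
      rw [hS]; ring
    rw [hrw]
    have := deza_endpoint T N M hT1 hTN hmZ
    linarith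
  have haltb : N < M - N + 1 := by nlinarith [mul_nonneg (by linarith : (0:ℤ) ≤ N - 1) (by linarith : (0:ℤ) ≤ N - 2)]
  -- the big-element set
  set X : Finset α := (F.sup id).filter (fun x => n ≤ d x) with hX
  have hbig : ∀ x ∈ X, (M - N + 2 : ℤ) ≤ (d x : ℤ) := by
    intro x hx
    obtain ⟨hxU, hnd⟩ := Finset.mem_filter.1 hx
    obtain ⟨B, hB, hxB⟩ := Finset.mem_sup.1 hxU
    have hq0 := hq x ⟨B, hB, hxB⟩
    by_contra hcon
    push_neg at hcon
    have ha : N ≤ (d x : ℤ) := by rw [hN]; exact_mod_cast hnd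
    have hb : (d x : ℤ) ≤ M - N + 1 := by linarith
    exact deza_convex T S ((N - T) * S) N (M - N + 1) (d x : ℤ)
      (by linarith) haltb hqn hqb ha hb hq0
  -- at most t big elements
  have hXt : X.card ≤ t := by
    by_contra hcon
    push_neg at hcon
    obtain ⟨Y, hYX, hYcard⟩ := Finset.exists_subset_card_eq hcon
    have hmiss : ∀ y ∈ Y, (F.filter fun B => y ∉ B).card ≤ n - 2 := by
      intro y hy
      have h1 : d y + (F.filter fun B => y ∉ B).card = m := by
        rw [hdd, hm]
        exact Finset.card_filter_add_card_filter_not _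
      have h2 := hbig y (hYX hy)
      rw [hM, hN] at h2
      omega
    have hsub : F.filter (fun B => ¬ Y ⊆ B) ⊆ Y.biUnion (fun y => F.filter fun B => y ∉ B) := by
      intro B hB
      obtain ⟨hBF, hnsub⟩ := Finset.mem_filter.1 hB
      obtain ⟨y, hy, hyB⟩ := Finset.not_subset.1 hnsub
      exact Finset.mem_biUnion.2 ⟨y, hy, Finset.mem_filter.2 ⟨hBF, hyB⟩⟩
    have hcard1 : (F.filter fun B => ¬ Y ⊆ B).card ≤ (t + 1) * (n - 2) := by
      calc (F.filter fun B => ¬ Y ⊆ B).card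
          ≤ (Y.biUnion (fun y => F.filter fun B => y ∉ B)).card := Finset.card_le_card hsub
        _ ≤ ∑ y ∈ Y, (F.filter fun B => y ∉ B).card := Finset.card_biUnion_le
        _ ≤ ∑ _y ∈ Y, (n - 2) := Finset.sum_le_sum hmiss
        _ = (t + 1) * (n - 2) := by rw [Finset.sum_const, hYcard, smul_eq_mul]
    have hcard2 : (F.filter fun B => Y ⊆ B).card + (F.filter fun B => ¬ Y ⊆ B).card = m := by
      rw [hm]
      exact Finset.card_filter_add_card_filter_not _
    have e1 : (t + 1) * (n - 2) ≤ n * (n - 2) := Nat.mul_le_mul_right _ (by omega)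
    have e2 : n * (n - 2) + 2 + n = n ^ 2 - n + 2 := by
      zify [hn2, hnn]
      ring
    have h2le : 1 < (F.filter fun B => Y ⊆ B).card := by omega
    obtain ⟨B, hB, B', hB', hBB'⟩ := Finset.one_lt_card.1 h2le
    have hYB : Y ⊆ B ∩ B' :=
      Finset.subset_inter (Finset.mem_filter.1 hB).2 (Finset.mem_filter.1 hB').2
    have hle := Finset.card_le_card hYB
    rw [hint B (Finset.mem_filter.1 hB).1 B' (Finset.mem_filter.1 hB').1 hBB'] at hle
    omega
  -- endgame
  by_cases hC : ∀ D ∈ F, t ≤ (D ∩ X).card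
  · obtain ⟨A, hA⟩ := Finset.card_pos.1 (by omega : 0 < F.card)
    have h2 : (A ∩ X).Nonempty := Finset.card_pos.1 (by have := hC A hA; omega)
    obtain ⟨x₀, hx₀⟩ := h2
    have hx₀X : x₀ ∈ X := (Finset.mem_inter.1 hx₀).2
    obtain ⟨D₀, hD₀, hx₀D₀⟩ := havoid x₀
    have h3 := hC D₀ hD₀
    have h4 : D₀ ∩ X ⊆ X.erase x₀ := by
      intro y hy
      obtain ⟨hyD, hyX⟩ := Finset.mem_inter.1 hy
      exact Finset.mem_erase.2 ⟨fun h => hx₀D₀ (h ▸ hyD), hyX⟩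
    have h5 := Finset.card_le_card h4
    rw [Finset.card_erase_of_mem hx₀X] at h5
    have h6 : 1 ≤ X.card := Finset.card_pos.2 ⟨x₀, hx₀X⟩
    omega
  · push_neg at hC
    obtain ⟨Dm, hDm, hDmX⟩ := hC
    have hsplit : ∑ x ∈ Dm ∩ X, (d x : ℤ) + ∑ x ∈ Dm \ X, (d x : ℤ) = ∑ x ∈ Dm, (d x : ℤ) :=
      Finset.sum_inter_add_sum_sdiff _ _ _
    have hb1 : ∑ x ∈ Dm ∩ X, (d x : ℤ) ≤ ((Dm ∩ X).card : ℤ) * (M - 1) := by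
      have hbd : ∀ x ∈ Dm ∩ X, (d x : ℤ) ≤ M - 1 := by
        intro x _
        have := hdm x
        rw [hM]
        omega
      calc ∑ x ∈ Dm ∩ X, (d x : ℤ) ≤ (Dm ∩ X).card • (M - 1) :=
            Finset.sum_le_card_nsmul _ _ _ hbd
        _ = ((Dm ∩ X).card : ℤ) * (M - 1) := nsmul_eq_mul _ _
    have hb2 : ∑ x ∈ Dm \ X, (d x : ℤ) ≤ ((Dm \ X).card : ℤ) * (N - 1) := by
      have hbd : ∀ x ∈ Dm \ X, (d x : ℤ) ≤ N - 1 := by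
        intro x hx
        obtain ⟨hxD, hxX⟩ := Finset.mem_sdiff.1 hx
        have hxU : x ∈ F.sup id := Finset.mem_sup.2 ⟨Dm, hDm, hxD⟩
        have hnd : ¬ (n ≤ d x) := fun h => hxX (Finset.mem_filter.2 ⟨hxU, h⟩)
        rw [hN]
        omega
      calc ∑ x ∈ Dm \ X, (d x : ℤ) ≤ (Dm \ X).card • (N - 1) :=
            Finset.sum_le_card_nsmul _ _ _ hbd
        _ = ((Dm \ X).card : ℤ) * (N - 1) := nsmul_eq_mul _ _
    have hcard3 : (Dm ∩ X).card + (Dm \ X).card = n := by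
      rw [Finset.card_inter_add_card_sdiff, huniform Dm hDm]
    set bZ : ℤ := ((Dm ∩ X).card : ℤ) with hbZ
    have hbt : bZ ≤ T - 1 := by
      rw [hbZ, hT]
      omega
    have hb0 : 0 ≤ bZ := by rw [hbZ]; positivity
    have hDmXcard : ((Dm \ X).card : ℤ) = N - bZ := by
      rw [hbZ, hN]
      omega
    have hfinal := hsum Dm hDm
    rw [← hsplit] at hfinal
    rw [hDmXcard] at hb2
    have hkey : N + T * (M - 1) ≤ bZ * (M - 1) + (N - bZ) * (N - 1) := by
      linarith [hb1, hb2, hfinal]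
    clear hb1 hb2 hfinal hsplit hsum hq hbig hqn hqb hdm hDmXcard
    nlinarith [hkey,
      mul_nonneg (by linarith : (0:ℤ) ≤ T - 1 - bZ) (by linarith : (0:ℤ) ≤ M - N),
      mul_nonneg (by linarith : (0:ℤ) ≤ N - 1) (by linarith : (0:ℤ) ≤ T - 1)]

/-- Deza's lemma on equidistant families. -/
theorem deza_lemma {α : Type*} [DecidableEq α] (n t : ℕ)
    (F : Finset (Finset α)) (huniform : ∀ A ∈ F, A.card = n)
    (ht : t < n)
    (hint : ∀ A ∈ F, ∀ B ∈ F, A ≠ B → (A ∩ B).card = t)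
    (hcard : F.card ≥ n ^ 2 - n + 2) :
    ∃ K : Finset α, ∀ A ∈ F, ∀ B ∈ F, A ≠ B → A ∩ B = K := by
  classical
  have hm2 : 2 ≤ F.card := le_trans (Nat.le_add_left 2 _) hcard
  have hFne : F.Nonempty := Finset.card_pos.1 (by omega)
  set Z := F.inf' hFne id with hZ
  have hZsub : ∀ B ∈ F, Z ⊆ B := fun B hB => Finset.inf'_le id hB
  by_cases hzt : Z.card = t
  · refine ⟨Z, fun A hA B hB hne => ?_⟩
    have h1 : Z ⊆ A ∩ B := Finset.subset_inter (hZsub A hA) (hZsub B hB)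
    have h2 : (A ∩ B).card ≤ Z.card := by rw [hint A hA B hB hne, hzt]
    exact (Finset.eq_of_subset_of_card_le h1 h2).symm
  · exfalso
    have hzle : Z.card ≤ t := by
      obtain ⟨A, hA, B, hB, hne⟩ := Finset.one_lt_card.1 hm2
      calc Z.card ≤ (A ∩ B).card :=
            Finset.card_le_card (Finset.subset_inter (hZsub A hA) (hZsub B hB))
        _ = t := hint A hA B hB hne
    have hzlt : Z.card < t := lt_of_le_of_ne hzle hzt
    set z := Z.card with hz
    set G := F.image (fun B => B \ Z) with hG
    have himg : ∀ {A B : Finset α}, A ∈ F → B ∈ F → A \ Z = B \ Z → A = B := by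
      intro A B hA hB h
      have h2 : A \ Z ∪ Z = B \ Z ∪ Z := by rw [h]
      rwa [Finset.sdiff_union_of_subset (hZsub A hA),
        Finset.sdiff_union_of_subset (hZsub B hB)] at h2
    have hGcard : G.card = F.card :=
      Finset.card_image_of_injOn (fun A hA B hB h => himg hA hB h)
    have hGuni : ∀ A' ∈ G, A'.card = n - z := by
      intro A' hA'
      obtain ⟨A, hA, rfl⟩ := Finset.mem_image.1 hA'
      rw [Finset.card_sdiff_of_subset (hZsub A hA), huniform A hA]
    have hGint : ∀ A' ∈ G, ∀ B' ∈ G, A' ≠ B' → (A' ∩ B').card = t - z := by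
      intro A' hA' B' hB' hne
      obtain ⟨A, hA, rfl⟩ := Finset.mem_image.1 hA'
      obtain ⟨B, hB, rfl⟩ := Finset.mem_image.1 hB'
      have hABne : A ≠ B := fun h => hne (by rw [h])
      have e1 : (A \ Z) ∩ (B \ Z) = (A ∩ B) \ Z := by
        ext x
        simp only [Finset.mem_sdiff, Finset.mem_inter]
        tauto
      rw [e1, Finset.card_sdiff_of_subset (Finset.subset_inter (hZsub A hA) (hZsub B hB)),
        hint A hA B hB hABne]
    have hGavoid : ∀ x : α, ∃ C' ∈ G, x ∉ C' := by
      intro x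
      by_cases hxZ : x ∈ Z
      · obtain ⟨A, hA⟩ := hFne
        exact ⟨A \ Z, Finset.mem_image_of_mem _ hA, fun hx => (Finset.mem_sdiff.1 hx).2 hxZ⟩
      · have hnall : ¬ ∀ B ∈ F, x ∈ B := by
          intro hall
          exact hxZ (Finset.singleton_subset_iff.1 (Finset.le_inf' hFne id
            (fun B hB => Finset.singleton_subset_iff.2 (hall B hB))))
        push_neg at hnall
        obtain ⟨B, hB, hxB⟩ := hnall
        exact ⟨B \ Z, Finset.mem_image_of_mem _ hB, fun hx => hxB (Finset.mem_sdiff.1 hx).1⟩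
    have h1 : 1 ≤ t - z := by omega
    have h2 : t - z < n - z := by omega
    have h3 : G.card ≥ (n - z) ^ 2 - (n - z) + 2 := by
      rw [hGcard]
      refine le_trans ?_ hcard
      have haa : n - z ≤ (n - z) ^ 2 := Nat.le_self_pow two_ne_zero _
      have hbb : n ≤ n ^ 2 := Nat.le_self_pow two_ne_zero n
      have hzn : z ≤ n := by omega
      have hn1 : 1 ≤ n := by omega
      zify [haa, hbb, hzn]
      have hz0 : (0:ℤ) ≤ (z:ℤ) := by positivity
      have hznZ : (z:ℤ) ≤ (n:ℤ) := by exact_mod_cast hzn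
      have hn1Z : (1:ℤ) ≤ (n:ℤ) := by exact_mod_cast hn1
      nlinarith [mul_nonneg hz0 (by linarith : (0:ℤ) ≤ 2*(n:ℤ) - z - 1)]
    exact deza_aux (n - z) (t - z) G hGuni h1 h2 hGint hGavoid h3
end

section
/- Let F be an L-intersecting, n-uniform set family with |L| = s ≥ 1 and L ⊂ ℕ. Let m = max{r-1, n² - n + 1}. If |F| > 2^{n log₂(s+1) + s log₂(m)} (equivalently |F| > (s+1)^n · m^s), then F contains an r-sunflower. -/
namespace LSunflowerAux

open Finset

/-! ### Arithmetic lemmas: binomial slices of `(a+1)^n` -/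

lemma slice_le (a n i : ℕ) (h : i ≤ n) : n.choose i * a ^ (n - i) ≤ (a + 1) ^ n := by
  have hexp : (a + 1) ^ n = ∑ j ∈ Finset.range (n + 1), a ^ j * 1 ^ (n - j) * (n.choose j) :=
    add_pow a 1 n
  have hmem : n - i ∈ Finset.range (n + 1) := by simp
  have hterm : a ^ (n - i) * 1 ^ (n - (n - i)) * (n.choose (n - i)) ≤
      ∑ j ∈ Finset.range (n + 1), a ^ j * 1 ^ (n - j) * (n.choose j) :=
    Finset.single_le_sum (f := fun j => a ^ j * 1 ^ (n - j) * (n.choose j))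
      (fun _ _ => Nat.zero_le _) hmem
  rw [hexp]
  calc n.choose i * a ^ (n - i)
      = a ^ (n - i) * 1 ^ (n - (n - i)) * (n.choose (n - i)) := by
        rw [Nat.choose_symm h]; ring
    _ ≤ _ := hterm

lemma pair_slice (a n g : ℕ) (ha : 1 ≤ a) (hg : 1 ≤ g) (hgn : g ≤ n) :
    1 + n.choose g * a ^ (n - g) ≤ (a + 1) ^ n := by
  have hexp : (a + 1) ^ n = ∑ j ∈ Finset.range (n + 1), a ^ j * 1 ^ (n - j) * (n.choose j) :=
    add_pow a 1 n
  have hsub : ({n - g, n} : Finset ℕ) ⊆ Finset.range (n + 1) := by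
    intro x hx; simp at hx; rcases hx with h | h <;> simp <;> omega
  have hne : n - g ≠ n := by omega
  have hpair : ∑ j ∈ ({n - g, n} : Finset ℕ), a ^ j * 1 ^ (n - j) * (n.choose j) ≤
      ∑ j ∈ Finset.range (n + 1), a ^ j * 1 ^ (n - j) * (n.choose j) :=
    Finset.sum_le_sum_of_subset hsub
  rw [hexp]
  rw [Finset.sum_pair hne] at hpair
  refine le_trans ?_ hpair
  have h1 : a ^ (n - g) * 1 ^ (n - (n - g)) * (n.choose (n - g)) = n.choose g * a ^ (n - g) := by
    rw [Nat.choose_symm hgn]; ring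
  have h2 : a ^ n * 1 ^ (n - n) * (n.choose n) = a ^ n := by simp
  rw [h1, h2]
  have : 1 ≤ a ^ n := Nat.one_le_pow _ _ (by omega)
  omega

/-! ### Sunflower and link lemmas -/

variable {α : Type*} [DecidableEq α]

lemma sunflower_of_pairwise {F P : Finset (Finset α)} {r : ℕ} (hPF : P ⊆ F)
    (hcard : r ≤ P.card) (K : Finset α) (h : ∀ A ∈ P, ∀ B ∈ P, A ≠ B → A ∩ B = K) :
    HasSunflower F r := by
  obtain ⟨Q, hQP, hQcard⟩ := Finset.exists_subset_card_eq hcard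
  exact ⟨Q, hQP.trans hPF, hQcard, K, fun A hA B hB hne => h A (hQP hA) B (hQP hB) hne⟩

/-- the "link" of a family at an element x -/
def link (H : Finset (Finset α)) (x : α) : Finset (Finset α) :=
  (H.filter (fun C => x ∈ C)).image (fun C => C.erase x)

lemma link_card (H : Finset (Finset α)) (x : α) :
    (link H x).card = (H.filter (fun C => x ∈ C)).card := by
  apply Finset.card_image_of_injOn
  intro C hC C' hC' hent
  simp only [Finset.mem_coe, Finset.mem_filter] at hC hC'
  have := congrArg (insert x) hent
  rwa [Finset.insert_erase hC.2, Finset.insert_erase hC'.2] at this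

lemma link_mem {H : Finset (Finset α)} {x : α} {X : Finset α} (h : X ∈ link H x) :
    ∃ C ∈ H, x ∈ C ∧ X = C.erase x := by
  simp only [link, Finset.mem_image, Finset.mem_filter] at h
  obtain ⟨C, ⟨hC, hx⟩, rfl⟩ := h
  exact ⟨C, hC, hx, rfl⟩

lemma link_uniform {H : Finset (Finset α)} {x : α} {N : ℕ} (hU : ∀ A ∈ H, A.card = N) :
    ∀ X ∈ link H x, X.card = N - 1 := by
  intro X hX
  obtain ⟨C, hC, hx, rfl⟩ := link_mem hX
  rw [Finset.card_erase_of_mem hx, hU C hC]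

lemma erase_inter_erase (x : α) (C C' : Finset α) :
    (C.erase x) ∩ (C'.erase x) = (C ∩ C').erase x := by
  ext z; simp only [Finset.mem_inter, Finset.mem_erase]; tauto

lemma link_inter_card {H : Finset (Finset α)} {x : α} {X X' : Finset α}
    (hX : X ∈ link H x) (hX' : X' ∈ link H x) (hne : X ≠ X') :
    ∃ C ∈ H, ∃ C' ∈ H, C ≠ C' ∧ x ∈ C ∧ x ∈ C' ∧ (X ∩ X').card = (C ∩ C').card - 1 := by
  obtain ⟨C, hC, hx, rfl⟩ := link_mem hX
  obtain ⟨C', hC', hx', rfl⟩ := link_mem hX'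
  have hCC' : C ≠ C' := by rintro rfl; exact hne rfl
  refine ⟨C, hC, C', hC', hCC', hx, hx', ?_⟩
  rw [erase_inter_erase, Finset.card_erase_of_mem (by simp [hx, hx'])]

lemma hasSunflower_of_link {H : Finset (Finset α)} {x : α} {r : ℕ}
    (h : HasSunflower (link H x) r) : HasSunflower H r := by
  obtain ⟨P, hPsub, hPcard, K, hK⟩ := h
  have hnx : ∀ X ∈ P, x ∉ X := by
    intro X hX
    obtain ⟨C, _, _, rfl⟩ := link_mem (hPsub hX)
    exact Finset.notMem_erase _ _
  refine ⟨P.image (insert x ·), ?_, ?_, insert x K, ?_⟩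
  · intro Y hY
    simp only [Finset.mem_image] at hY
    obtain ⟨X, hX, rfl⟩ := hY
    obtain ⟨C, hC, hxC, rfl⟩ := link_mem (hPsub hX)
    rwa [Finset.insert_erase hxC]
  · rw [Finset.card_image_of_injOn, hPcard]
    intro X hX X' hX' he
    have := congrArg (fun t => Finset.erase t x) he
    simpa [Finset.erase_insert (hnx X hX), Finset.erase_insert (hnx X' hX')] using this
  · intro A hA B hB hne
    simp only [Finset.mem_image] at hA hB
    obtain ⟨X, hX, rfl⟩ := hA
    obtain ⟨X', hX', rfl⟩ := hB
    have hXX' : X ≠ X' := by rintro rfl; exact hne rfl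
    have hii : insert x X ∩ insert x X' = insert x (X ∩ X') := by
      ext z; simp only [Finset.mem_inter, Finset.mem_insert]; tauto
    rw [hii, hK X hX X' hX' hXX']

lemma double_count (A : Finset α) (S : Finset (Finset α)) :
    ∑ C ∈ S, (A ∩ C).card = ∑ x ∈ A, (S.filter (fun C => x ∈ C)).card := by
  have h1 : ∀ C, (A ∩ C).card = ∑ x ∈ A, if x ∈ C then 1 else 0 := by
    intro C
    rw [← Finset.card_filter, Finset.filter_mem_eq_inter]
  have h2 : ∀ x, (S.filter (fun C => x ∈ C)).card = ∑ C ∈ S, if x ∈ C then 1 else 0 := by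
    intro x; exact Finset.card_filter _ _
  simp only [h1, h2]
  exact Finset.sum_comm

lemma exists_maximal_disjoint (H : Finset (Finset α)) :
    ∃ D, D ⊆ H ∧ (∀ A ∈ D, ∀ B ∈ D, A ≠ B → A ∩ B = ∅) ∧
      (∀ C ∈ H, C ∉ D → ∃ A ∈ D, C ∩ A ≠ ∅) := by
  classical
  set S := H.powerset.filter (fun D => ∀ A ∈ D, ∀ B ∈ D, A ≠ B → A ∩ B = ∅) with hS
  have hema : (∅ : Finset (Finset α)) ∈ S := by simp [hS]
  obtain ⟨D, hDS, hDmax⟩ : ∃ D ∈ S, ∀ x ∈ S, ¬ D < x := by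
    obtain ⟨D, hD⟩ := Finset.exists_maximal (s := S) ⟨∅, hema⟩
    exact ⟨D, hD.1, fun x hx hlt => lt_irrefl _ (lt_of_lt_of_le hlt (hD.2 hx hlt.le))⟩
  simp only [hS, mem_filter, mem_powerset] at hDS
  refine ⟨D, hDS.1, hDS.2, ?_⟩
  intro C hCH hCD
  by_contra hcon
  push_neg at hcon
  have hins : insert C D ∈ S := by
    simp only [hS, mem_filter, mem_powerset]
    refine ⟨insert_subset hCH hDS.1, ?_⟩
    intro A hA B hB hne
    rcases mem_insert.mp hA with rfl | hA' <;> rcases mem_insert.mp hB with rfl | hB'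
    · exact absurd rfl hne
    · exact hcon B hB'
    · rw [inter_comm]; exact hcon A hA'
    · exact hDS.2 A hA' B hB' hne
  exact hDmax _ hins (Finset.ssubset_insert hCD)

/-! ### The two main induction statements -/

/-- "Bottom" statement: families whose intersection sizes lie in `insert 0 Lp`,
with `Lp` a set of `k` positive values. -/
def BotStmt (α : Type*) [DecidableEq α] (r k : ℕ) : Prop :=
  ∀ (N : ℕ) (Lp : Finset ℕ) (H : Finset (Finset α)),
    Lp.card = k → (∀ x ∈ Lp, 0 < x ∧ x < N) →
    (∀ A ∈ H, A.card = N) →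
    (∀ A ∈ H, ∀ B ∈ H, A ≠ B → (A ∩ B).card ∈ insert 0 Lp) →
    ¬ HasSunflower H r → H.card ≤ (r - 1) ^ (k + 1) * (k + 1) ^ N

/-- "Stretch" statement: families whose intersection sizes lie in `L`, `|L| = k+1`,
with minimum `lam`. -/
def StrStmt (α : Type*) [DecidableEq α] (r k : ℕ) : Prop :=
  ∀ (lam n : ℕ) (L : Finset ℕ) (F : Finset (Finset α)),
    L.card = k + 1 → lam ∈ L → (∀ ℓ ∈ L, lam ≤ ℓ) → (∀ ℓ ∈ L, ℓ < n) →
    (∀ A ∈ F, A.card = n) →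
    (∀ A ∈ F, ∀ B ∈ F, A ≠ B → (A ∩ B).card ∈ L) →
    ¬ HasSunflower F r →
    F.card ≤ 1 + n.choose lam * ((r - 1) ^ (k + 1) * (k + 1) ^ (n - lam) - 1)

lemma bottom_zero (r : ℕ) (hr : 2 ≤ r) : BotStmt α r 0 := by
  intro N Lp H hLpcard hLpb hunif hint hnsf
  have hLp : Lp = ∅ := Finset.card_eq_zero.mp hLpcard
  subst hLp
  have hdisj : ∀ A ∈ H, ∀ B ∈ H, A ≠ B → A ∩ B = ∅ := by
    intro A hA B hB hne
    have := hint A hA B hB hne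
    simp only [LawfulSingleton.insert_empty_eq, mem_singleton] at this
    exact Finset.card_eq_zero.mp this
  have hle : H.card ≤ r - 1 := by
    by_contra hcon
    push_neg at hcon
    exact hnsf (sunflower_of_pairwise (Finset.Subset.refl H) (by omega) ∅ hdisj)
  simpa using hle

lemma stretch_of_bottom (r k : ℕ) (hr : 2 ≤ r) (hbot : BotStmt α r k) : StrStmt α r k := by
  intro lam
  induction lam with
  | zero =>
    intro n L F hLcard hlam hlow hupp hunif hint hnsf
    have h0L : (0 : ℕ) ∈ L := hlam
    set Lp := L.erase 0 with hLpdef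
    have hLp : insert 0 Lp = L := Finset.insert_erase h0L
    have hLpcard : Lp.card = k := by
      rw [hLpdef, Finset.card_erase_of_mem h0L, hLcard]; omega
    have hLpb : ∀ x ∈ Lp, 0 < x ∧ x < n := by
      intro x hx
      rw [hLpdef, Finset.mem_erase] at hx
      exact ⟨Nat.pos_of_ne_zero hx.1, hupp x hx.2⟩
    have hb := hbot n Lp F hLpcard hLpb hunif (by rw [hLp]; exact hint) hnsf
    have hX1 : 1 ≤ (r - 1) ^ (k + 1) * (k + 1) ^ (n - 0) := by
      have h1 : 1 ≤ (r - 1) ^ (k + 1) := Nat.one_le_pow _ _ (by omega)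
      have h2 : 1 ≤ (k + 1) ^ (n - 0) := Nat.one_le_pow _ _ (by omega)
      simpa using Nat.mul_le_mul h1 h2
    have hch : n.choose 0 = 1 := Nat.choose_zero_right n
    rw [hch]
    simp only [Nat.sub_zero]
    omega
  | succ lam ih =>
    intro n L F hLcard hlam hlow hupp hunif hint hnsf
    by_cases hF1 : F.card ≤ 1
    · exact le_trans hF1 (by omega)
    push_neg at hF1
    obtain ⟨A, hA⟩ : F.Nonempty := Finset.card_pos.mp (by omega)
    have hnlam : lam + 1 < n := hupp _ hlam
    obtain ⟨n', rfl⟩ : ∃ n', n = n' + 1 := ⟨n - 1, by omega⟩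
    set F' := F.erase A with hF'def
    have hF'card : F'.card = F.card - 1 := Finset.card_erase_of_mem hA
    -- every member of F' meets A in at least lam+1 points
    have hsum1 : F'.card * (lam + 1) ≤ ∑ C ∈ F', (A ∩ C).card := by
      have h := Finset.card_nsmul_le_sum F' (fun C => (A ∩ C).card) (lam + 1) ?_
      · simpa [smul_eq_mul] using h
      · intro C hC
        have hCF : C ∈ F := Finset.mem_of_mem_erase hC
        have hCA : A ≠ C := fun h => (Finset.mem_erase.mp hC).1 h.symm
        exact hlow _ (hint A hA C hCF hCA)
    rw [double_count] at hsum1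
    -- pick a maximizing element x of A
    have hAne : A.Nonempty := by
      rw [← Finset.card_pos, hunif A hA]; omega
    obtain ⟨x, hxA, hxmax⟩ :=
      Finset.exists_max_image A (fun x => (F'.filter (fun C => x ∈ C)).card) hAne
    set d := (F'.filter (fun C => x ∈ C)).card with hd
    have hsum2 : ∑ y ∈ A, (F'.filter (fun C => y ∈ C)).card ≤ (n' + 1) * d := by
      have h := Finset.sum_le_card_nsmul A (fun y => (F'.filter (fun C => y ∈ C)).card) d
        (fun y hy => hxmax y hy)
      rwa [hunif A hA, smul_eq_mul] at h
    have hkey1 : F'.card * (lam + 1) ≤ (n' + 1) * d := le_trans hsum1 hsum2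
    -- the link of F at x
    set Fx := link F x with hFx
    have hdlink : d + 1 ≤ Fx.card := by
      rw [hFx, link_card]
      have hsub : insert A (F'.filter (fun C => x ∈ C)) ⊆ F.filter (fun C => x ∈ C) := by
        intro C hC
        rcases Finset.mem_insert.mp hC with rfl | hC'
        · exact Finset.mem_filter.mpr ⟨hA, hxA⟩
        · have := Finset.mem_filter.mp hC'
          exact Finset.mem_filter.mpr ⟨Finset.mem_of_mem_erase this.1, this.2⟩
      have hAni : A ∉ F'.filter (fun C => x ∈ C) := by
        intro h
        exact (Finset.mem_erase.mp (Finset.mem_filter.mp h).1).1 rfl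
      calc d + 1 = (insert A (F'.filter (fun C => x ∈ C))).card := by
            rw [Finset.card_insert_of_notMem hAni]
        _ ≤ _ := Finset.card_le_card hsub
    -- apply the induction hypothesis to the link
    set L1 := L.image (· - 1) with hL1
    have hpos : ∀ ℓ ∈ L, 1 ≤ ℓ := fun ℓ h => le_trans (by omega) (hlow ℓ h)
    have hL1card : L1.card = k + 1 := by
      rw [hL1, Finset.card_image_of_injOn, hLcard]
      intro a ha b hb hab
      have h1 := hpos a ha; have h2 := hpos b hb
      simp only at hab
      omega
    have hlam1 : lam ∈ L1 := by
      rw [hL1]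
      exact Finset.mem_image.mpr ⟨lam + 1, hlam, by simp⟩
    have hlow1 : ∀ ℓ ∈ L1, lam ≤ ℓ := by
      intro ℓ hℓ
      obtain ⟨a, ha, rfl⟩ := Finset.mem_image.mp hℓ
      have h1 := hlow a ha
      omega
    have hupp1 : ∀ ℓ ∈ L1, ℓ < n' + 1 - 1 := by
      intro ℓ hℓ
      obtain ⟨a, ha, rfl⟩ := Finset.mem_image.mp hℓ
      have h1 := hupp a ha; have h2 := hpos a ha
      omega
    have hunif1 : ∀ X ∈ Fx, X.card = n' + 1 - 1 := link_uniform hunif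
    have hint1 : ∀ X ∈ Fx, ∀ X' ∈ Fx, X ≠ X' → (X ∩ X').card ∈ L1 := by
      intro X hX X' hX' hne
      obtain ⟨C, hC, C', hC', hCC', hxC, hxC', hcc⟩ := link_inter_card hX hX' hne
      rw [hcc, hL1]
      exact Finset.mem_image.mpr ⟨(C ∩ C').card, hint C hC C' hC' hCC', rfl⟩
    have hnsf1 : ¬ HasSunflower Fx r := fun h => hnsf (hasSunflower_of_link h)
    have hihFx := ih (n' + 1 - 1) L1 Fx hL1card hlam1 hlow1 hupp1 hunif1 hint1 hnsf1
    simp only [Nat.add_sub_cancel] at hihFx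
    have hcomb := le_trans hdlink hihFx
    have hdZ : d ≤ n'.choose lam * ((r - 1) ^ (k + 1) * (k + 1) ^ (n' - lam) - 1) := by omega
    -- the choose identity
    have hid : (n' + 1) * n'.choose lam = (n' + 1).choose (lam + 1) * (lam + 1) :=
      Nat.add_one_mul_choose_eq n' lam
    have hchain : F'.card * (lam + 1) ≤
        ((n' + 1).choose (lam + 1) *
          ((r - 1) ^ (k + 1) * (k + 1) ^ (n' - lam) - 1)) * (lam + 1) := by
      calc F'.card * (lam + 1) ≤ (n' + 1) * d := hkey1
        _ ≤ (n' + 1) * (n'.choose lam * ((r - 1) ^ (k + 1) * (k + 1) ^ (n' - lam) - 1)) :=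
            Nat.mul_le_mul_left _ hdZ
        _ = ((n' + 1) * n'.choose lam) * ((r - 1) ^ (k + 1) * (k + 1) ^ (n' - lam) - 1) := by
            ring
        _ = ((n' + 1).choose (lam + 1) * (lam + 1)) *
              ((r - 1) ^ (k + 1) * (k + 1) ^ (n' - lam) - 1) := by rw [hid]
        _ = _ := by ring
    have hF'le : F'.card ≤
        (n' + 1).choose (lam + 1) * ((r - 1) ^ (k + 1) * (k + 1) ^ (n' - lam) - 1) :=
      Nat.le_of_mul_le_mul_right hchain (by omega)
    have hgoal : n' + 1 - (lam + 1) = n' - lam := by omega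
    rw [hgoal]
    omega

lemma bottom_succ (r k : ℕ) (hr : 2 ≤ r) (hstr : StrStmt α r k) : BotStmt α r (k + 1) := by
  intro N Lp H hLpcard hLpb hunif hint hnsf
  rcases H.eq_empty_or_nonempty with rfl | hHne
  · simp
  have hLpne : Lp.Nonempty := Finset.card_pos.mp (by omega)
  obtain ⟨g, hgLp, hgle⟩ : ∃ g ∈ Lp, ∀ x ∈ Lp, g ≤ x :=
    ⟨Lp.min' hLpne, Lp.min'_mem hLpne, fun x hx => Lp.min'_le x hx⟩
  obtain ⟨hgpos, hgN⟩ := hLpb g hgLp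
  -- maximal pairwise-disjoint subfamily
  obtain ⟨D, hDH, hDdisj, hDmax⟩ := exists_maximal_disjoint H
  have hDcard : D.card ≤ r - 1 := by
    by_contra hcon
    push_neg at hcon
    exact hnsf (sunflower_of_pairwise hDH (by omega) ∅ hDdisj)
  -- every set outside D meets some member of D in ≥ g points
  have hkey : ∀ C ∈ H \ D, g ≤ ∑ A ∈ D, (C ∩ A).card := by
    intro C hC
    have hC1 : C ∈ H := (Finset.mem_sdiff.mp hC).1
    have hC2 : C ∉ D := (Finset.mem_sdiff.mp hC).2
    obtain ⟨A, hAD, hCA⟩ := hDmax C hC1 hC2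
    have hCneA : C ≠ A := by rintro rfl; exact hC2 hAD
    have h1 : (C ∩ A).card ∈ insert 0 Lp := hint C hC1 A (hDH hAD) hCneA
    have h2 : (C ∩ A).card ≠ 0 := fun h => hCA (Finset.card_eq_zero.mp h)
    have h3 : (C ∩ A).card ∈ Lp := by
      rcases Finset.mem_insert.mp h1 with h | h
      · exact absurd h h2
      · exact h
    exact le_trans (hgle _ h3)
      (Finset.single_le_sum (f := fun A => (C ∩ A).card) (fun _ _ => Nat.zero_le _) hAD)
  have hstep1 : (H \ D).card * g ≤ ∑ C ∈ H \ D, ∑ A ∈ D, (C ∩ A).card := by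
    have h := Finset.card_nsmul_le_sum (H \ D) (fun C => ∑ A ∈ D, (C ∩ A).card) g hkey
    simpa [smul_eq_mul] using h
  -- bound on the link at any element
  set E := (r - 1) ^ (k + 1) * (k + 1) ^ (N - g) with hE
  set Q := 1 + (N - 1).choose (g - 1) * (E - 1) with hQ
  have hlinkbound : ∀ x : α, (H.filter (fun C => x ∈ C)).card ≤ Q := by
    intro x
    rw [← link_card]
    set L1 := Lp.image (· - 1) with hL1
    have hL1card : L1.card = k + 1 := by
      rw [hL1, Finset.card_image_of_injOn, hLpcard]
      intro a ha b hb hab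
      have h1 := (hLpb a ha).1; have h2 := (hLpb b hb).1
      simp only at hab
      omega
    have hg1 : g - 1 ∈ L1 := Finset.mem_image.mpr ⟨g, hgLp, rfl⟩
    have hlow1 : ∀ ℓ ∈ L1, g - 1 ≤ ℓ := by
      intro ℓ hℓ
      obtain ⟨a, ha, rfl⟩ := Finset.mem_image.mp hℓ
      have h1 := hgle a ha; omega
    have hupp1 : ∀ ℓ ∈ L1, ℓ < N - 1 := by
      intro ℓ hℓ
      obtain ⟨a, ha, rfl⟩ := Finset.mem_image.mp hℓ
      have h1 := (hLpb a ha).1; have h2 := (hLpb a ha).2; omega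
    have hunif1 : ∀ X ∈ link H x, X.card = N - 1 := link_uniform hunif
    have hint1 : ∀ X ∈ link H x, ∀ X' ∈ link H x, X ≠ X' → (X ∩ X').card ∈ L1 := by
      intro X hX X' hX' hne
      obtain ⟨C, hC, C', hC', hCC', hxC, hxC', hcc⟩ := link_inter_card hX hX' hne
      have h1 : (C ∩ C').card ∈ insert 0 Lp := hint C hC C' hC' hCC'
      have h2 : (C ∩ C').card ≠ 0 := by
        have : x ∈ C ∩ C' := Finset.mem_inter.mpr ⟨hxC, hxC'⟩
        have := Finset.card_pos.mpr ⟨x, this⟩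
        omega
      have h3 : (C ∩ C').card ∈ Lp := by
        rcases Finset.mem_insert.mp h1 with h | h
        · exact absurd h h2
        · exact h
      rw [hcc]
      exact Finset.mem_image.mpr ⟨(C ∩ C').card, h3, rfl⟩
    have hnsf1 : ¬ HasSunflower (link H x) r := fun h => hnsf (hasSunflower_of_link h)
    have h := hstr (g - 1) (N - 1) L1 (link H x) hL1card hg1 hlow1 hupp1 hunif1 hint1 hnsf1
    have hexp : N - 1 - (g - 1) = N - g := by omega
    rw [hexp] at h
    exact h
  -- combine the double counting with the link bound
  have hstep2 : ∑ C ∈ H \ D, ∑ A ∈ D, (C ∩ A).card ≤ D.card * (N * Q) := by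
    rw [Finset.sum_comm]
    have hinner : ∀ A ∈ D, ∑ C ∈ H \ D, (C ∩ A).card ≤ N * Q := by
      intro A hAD
      have hswap : ∑ C ∈ H \ D, (C ∩ A).card = ∑ C ∈ H \ D, (A ∩ C).card :=
        Finset.sum_congr rfl (fun C _ => by rw [Finset.inter_comm])
      rw [hswap, double_count]
      have hx : ∀ x ∈ A, ((H \ D).filter (fun C => x ∈ C)).card ≤ Q := by
        intro x _
        refine le_trans ?_ (hlinkbound x)
        exact Finset.card_le_card (Finset.filter_subset_filter _ (Finset.sdiff_subset))
      calc ∑ x ∈ A, ((H \ D).filter (fun C => x ∈ C)).card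
          ≤ ∑ _x ∈ A, Q := Finset.sum_le_sum hx
        _ = N * Q := by rw [Finset.sum_const, smul_eq_mul, hunif A (hDH hAD)]
    calc ∑ A ∈ D, ∑ C ∈ H \ D, (C ∩ A).card ≤ ∑ _A ∈ D, N * Q := Finset.sum_le_sum hinner
      _ = D.card * (N * Q) := by rw [Finset.sum_const, smul_eq_mul]
  -- arithmetic assembly
  have hE1 : 1 ≤ E := by
    rw [hE]
    have h1 : 1 ≤ (r - 1) ^ (k + 1) := Nat.one_le_pow _ _ (by omega)
    have h2 : 1 ≤ (k + 1) ^ (N - g) := Nat.one_le_pow _ _ (by omega)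
    simpa using Nat.mul_le_mul h1 h2
  have hid : N * ((N - 1).choose (g - 1)) = N.choose g * g := by
    obtain ⟨N', rfl⟩ : ∃ N', N = N' + 1 := ⟨N - 1, by omega⟩
    obtain ⟨g', rfl⟩ : ∃ g', g = g' + 1 := ⟨g - 1, by omega⟩
    simpa using Nat.add_one_mul_choose_eq N' g'
  have hNle : N ≤ N.choose g * g := by
    have h1 : 1 ≤ (N - 1).choose (g - 1) := Nat.choose_pos (by omega)
    calc N = N * 1 := by ring
      _ ≤ N * ((N - 1).choose (g - 1)) := Nat.mul_le_mul_left _ h1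
      _ = N.choose g * g := hid
  have hNQ : N * Q ≤ g * (N.choose g * E) := by
    calc N * Q = N * 1 + N * ((N - 1).choose (g - 1) * (E - 1)) := by
          rw [hQ]; ring
      _ = N + (N * ((N - 1).choose (g - 1))) * (E - 1) := by ring
      _ = N + (N.choose g * g) * (E - 1) := by rw [hid]
      _ ≤ N.choose g * g + (N.choose g * g) * (E - 1) := by
          exact Nat.add_le_add_right hNle _
      _ = (N.choose g * g) * (1 + (E - 1)) := by ring
      _ = (N.choose g * g) * E := by
          congr 1; omega
      _ = g * (N.choose g * E) := by ring
  have hchain : (H \ D).card * g ≤ ((r - 1) * (N.choose g * E)) * g := by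
    calc (H \ D).card * g ≤ D.card * (N * Q) := le_trans hstep1 hstep2
      _ ≤ (r - 1) * (N * Q) := Nat.mul_le_mul_right _ hDcard
      _ ≤ (r - 1) * (g * (N.choose g * E)) := Nat.mul_le_mul_left _ hNQ
      _ = ((r - 1) * (N.choose g * E)) * g := by ring
  have hsd : (H \ D).card ≤ (r - 1) * (N.choose g * E) :=
    Nat.le_of_mul_le_mul_right hchain (by omega)
  have hsplit : (H \ D).card + D.card = H.card := Finset.card_sdiff_add_card_eq_card hDH
  have hHle : H.card ≤ (r - 1) * (N.choose g * E + 1) := by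
    have : H.card ≤ (r - 1) * (N.choose g * E) + (r - 1) := by omega
    calc H.card ≤ (r - 1) * (N.choose g * E) + (r - 1) := this
      _ = (r - 1) * (N.choose g * E + 1) := by ring
  -- final: (r-1) * (choose * E + 1) ≤ (r-1)^(k+2) * (k+2)^N
  have hfin1 : N.choose g * E + 1 ≤ (r - 1) ^ (k + 1) * (N.choose g * (k + 1) ^ (N - g) + 1) := by
    have h1 : 1 ≤ (r - 1) ^ (k + 1) := Nat.one_le_pow _ _ (by omega)
    have : N.choose g * E = (r - 1) ^ (k + 1) * (N.choose g * (k + 1) ^ (N - g)) := by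
      rw [hE]; ring
    rw [this]
    calc (r - 1) ^ (k + 1) * (N.choose g * (k + 1) ^ (N - g)) + 1
        ≤ (r - 1) ^ (k + 1) * (N.choose g * (k + 1) ^ (N - g)) + (r - 1) ^ (k + 1) := by omega
      _ = (r - 1) ^ (k + 1) * (N.choose g * (k + 1) ^ (N - g) + 1) := by ring
  have hfin2 : N.choose g * (k + 1) ^ (N - g) + 1 ≤ (k + 2) ^ N := by
    have h := pair_slice (k + 1) N g (by omega) (by omega) (by omega)
    have he : k + 1 + 1 = k + 2 := by omega
    rw [he] at h
    omega
  calc H.card ≤ (r - 1) * (N.choose g * E + 1) := hHle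
    _ ≤ (r - 1) * ((r - 1) ^ (k + 1) * (N.choose g * (k + 1) ^ (N - g) + 1)) :=
        Nat.mul_le_mul_left _ hfin1
    _ ≤ (r - 1) * ((r - 1) ^ (k + 1) * (k + 2) ^ N) := by
        exact Nat.mul_le_mul_left _ (Nat.mul_le_mul_left _ hfin2)
    _ = (r - 1) ^ (k + 1 + 1) * (k + 1 + 1) ^ N := by ring

lemma both_stmts (r : ℕ) (hr : 2 ≤ r) : ∀ k, BotStmt α r k ∧ StrStmt α r k := by
  intro k
  induction k with
  | zero => exact ⟨bottom_zero r hr, stretch_of_bottom r 0 hr (bottom_zero r hr)⟩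
  | succ k ih =>
    have hb := bottom_succ r k hr ih.2
    exact ⟨hb, stretch_of_bottom r (k + 1) hr hb⟩

end LSunflowerAux

/-- Theorem for L-intersecting families with |L| = s:
|F| > (s+1)^n · m^s (= 2^{n log₂(s+1) + s log₂ m}) forces an r-sunflower. -/
theorem l_intersecting_sunflower_bound {α : Type*} [DecidableEq α] (n r s : ℕ)
    (L : Finset ℕ) (hs : L.card = s) (hs1 : 1 ≤ s)
    (F : Finset (Finset α)) (huniform : ∀ A ∈ F, A.card = n)
    (hL : ∀ A ∈ F, ∀ B ∈ F, A ≠ B → (A ∩ B).card ∈ L)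
    (m : ℕ) (hm : m = max (r - 1) (n ^ 2 - n + 1))
    (hcard : F.card > (s + 1) ^ n * m ^ s) :
    HasSunflower F r := by
  classical
  open Finset LSunflowerAux in
  -- trivial cases r = 0, r = 1
  match r, hm with
  | 0, hm =>
    exact ⟨∅, Finset.empty_subset F, Finset.card_empty, ∅, by simp⟩
  | 1, hm =>
    have hFne : F.Nonempty := Finset.card_pos.mp (by omega)
    obtain ⟨A, hA⟩ := hFne
    refine ⟨{A}, Finset.singleton_subset_iff.mpr hA, Finset.card_singleton A, ∅, ?_⟩
    intro B hB C hC hne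
    rw [Finset.mem_singleton] at hB hC
    exact absurd (hB.trans hC.symm) hne
  | (r + 2), hm =>
    set r' := r + 2 with hr'
    have hr : 2 ≤ r' := by omega
    by_contra hnsf
    have hm1 : 1 ≤ m := by
      rw [hm]
      exact le_trans (Nat.le_add_left 1 _) (le_max_right _ _)
    have hrm : r' - 1 ≤ m := by rw [hm]; exact le_max_left _ _
    have hb1 : 1 ≤ (s + 1) ^ n * m ^ s := by
      have h1 : 1 ≤ (s + 1) ^ n := Nat.one_le_pow _ _ (by omega)
      have h2 : 1 ≤ m ^ s := Nat.one_le_pow _ _ (by omega)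
      simpa using Nat.mul_le_mul h1 h2
    rcases Nat.eq_zero_or_pos n with rfl | hn
    · -- n = 0 : all members are ∅, so |F| ≤ 1
      have hF1 : F.card ≤ 1 := by
        apply Finset.card_le_one.mpr
        intro a ha b hb
        have h1 : a = ∅ := Finset.card_eq_zero.mp (huniform a ha)
        have h2 : b = ∅ := Finset.card_eq_zero.mp (huniform b hb)
        rw [h1, h2]
      omega
    -- n ≥ 1 : prune L to values < n
    set L' := L.filter (· < n) with hL'def
    have hL' : ∀ A ∈ F, ∀ B ∈ F, A ≠ B → (A ∩ B).card ∈ L' := by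
      intro A hA B hB hne
      rw [hL'def, Finset.mem_filter]
      refine ⟨hL A hA B hB hne, ?_⟩
      have hsub : A ∩ B ⊆ A := Finset.inter_subset_left
      have hle : (A ∩ B).card ≤ n := by rw [← huniform A hA]; exact Finset.card_le_card hsub
      rcases lt_or_eq_of_le hle with h | h
      · exact h
      · exfalso
        have hAB : A ∩ B = A := Finset.eq_of_subset_of_card_le hsub (by
          rw [h, huniform A hA])
        have hABsub : A ⊆ B := by rw [← hAB]; exact Finset.inter_subset_right
        have : A = B := Finset.eq_of_subset_of_card_le hABsub (by
          rw [huniform A hA, huniform B hB])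
        exact hne this
    rcases L'.eq_empty_or_nonempty with hLe | hLne
    · -- L' empty: |F| ≤ 1
      have hF1 : F.card ≤ 1 := by
        apply Finset.card_le_one.mpr
        intro a ha b hb
        by_contra hne
        have := hL' a ha b hb hne
        rw [hLe] at this
        exact absurd this (Finset.notMem_empty _)
      omega
    · obtain ⟨lam, hlamL', hlamle⟩ : ∃ g ∈ L', ∀ x ∈ L', g ≤ x :=
        ⟨L'.min' hLne, L'.min'_mem hLne, fun x hx => L'.min'_le x hx⟩
      obtain ⟨k, hk⟩ : ∃ k, L'.card = k + 1 := by
        have : 0 < L'.card := Finset.card_pos.mpr hLne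
        exact ⟨L'.card - 1, by omega⟩
      have hupp : ∀ ℓ ∈ L', ℓ < n := by
        intro ℓ hℓ
        rw [hL'def, Finset.mem_filter] at hℓ
        exact hℓ.2
      have hmain := (both_stmts (α := α) r' hr k).2 lam n L' F hk hlamL' hlamle hupp
        huniform hL' hnsf
      -- now the arithmetic chain
      have hlamn : lam < n := hupp lam hlamL'
      have hZ1 : 1 ≤ (r' - 1) ^ (k + 1) * (k + 1) ^ (n - lam) := by
        have h1 : 1 ≤ (r' - 1) ^ (k + 1) := Nat.one_le_pow _ _ (by omega)
        have h2 : 1 ≤ (k + 1) ^ (n - lam) := Nat.one_le_pow _ _ (by omega)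
        simpa using Nat.mul_le_mul h1 h2
      have hc1 : 1 ≤ n.choose lam := Nat.choose_pos (le_of_lt hlamn)
      have hstep1 : F.card ≤ n.choose lam * ((r' - 1) ^ (k + 1) * (k + 1) ^ (n - lam)) := by
        have hmm := Nat.mul_succ (n.choose lam)
          ((r' - 1) ^ (k + 1) * (k + 1) ^ (n - lam) - 1)
        have hsc : (r' - 1) ^ (k + 1) * (k + 1) ^ (n - lam) - 1 + 1 =
            (r' - 1) ^ (k + 1) * (k + 1) ^ (n - lam) := by omega
        rw [Nat.succ_eq_add_one, hsc] at hmm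
        omega
      have hstep2 : n.choose lam * ((r' - 1) ^ (k + 1) * (k + 1) ^ (n - lam)) =
          (r' - 1) ^ (k + 1) * (n.choose lam * (k + 1) ^ (n - lam)) := by ring
      have hstep3 : n.choose lam * (k + 1) ^ (n - lam) ≤ (k + 2) ^ n := by
        have h := slice_le (k + 1) n lam (le_of_lt hlamn)
        have he : k + 1 + 1 = k + 2 := by omega
        rwa [he] at h
      have hks : k + 1 ≤ s := by
        rw [← hs, ← hk, hL'def]
        exact Finset.card_filter_le _ _
      have hstep4 : (r' - 1) ^ (k + 1) ≤ m ^ s := by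
        calc (r' - 1) ^ (k + 1) ≤ m ^ (k + 1) := Nat.pow_le_pow_left hrm _
          _ ≤ m ^ s := Nat.pow_le_pow_right hm1 hks
      have hstep5 : (k + 2) ^ n ≤ (s + 1) ^ n := Nat.pow_le_pow_left (by omega) _
      have hfinal : F.card ≤ (s + 1) ^ n * m ^ s := by
        calc F.card ≤ n.choose lam * ((r' - 1) ^ (k + 1) * (k + 1) ^ (n - lam)) := hstep1
          _ = (r' - 1) ^ (k + 1) * (n.choose lam * (k + 1) ^ (n - lam)) := hstep2
          _ ≤ m ^ s * (k + 2) ^ n := Nat.mul_le_mul hstep4 hstep3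
          _ ≤ m ^ s * (s + 1) ^ n := Nat.mul_le_mul_left _ hstep5
          _ = (s + 1) ^ n * m ^ s := by ring
      omega
end

section
/- Let F be an n-uniform family over a finite ground set X that is κ-spread for κ > 1. If F contains no r pairwise disjoint sets, then F is not (1/r, 1/r)-satisfying; contrapositively, if F is (1/r, 1/r)-satisfying and ∅ ∉ F, then F contains r pairwise disjoint sets. -/
open Finset

section Aux

variable {α : Type*} [DecidableEq α] {r : ℕ}

/-- The `i`-th part of the partition of `X` induced by `f : ↥X → Fin r`. -/
def RsetPart (X : Finset α) (f : ↥X → Fin r) (i : Fin r) : Finset α :=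
  (X.attach.filter fun x => f x = i).image Subtype.val

lemma mem_RsetPart {X : Finset α} {f : ↥X → Fin r} {i : Fin r} {a : α} :
    a ∈ RsetPart X f i ↔ ∃ h : a ∈ X, f ⟨a, h⟩ = i := by
  simp only [RsetPart, mem_image, mem_filter, mem_attach, true_and, Subtype.exists]
  constructor
  · rintro ⟨b, hb, hfb, rfl⟩; exact ⟨hb, hfb⟩
  · rintro ⟨h, hf⟩; exact ⟨a, h, hf, rfl⟩

lemma RsetPart_subset {X : Finset α} {f : ↥X → Fin r} {i : Fin r} :
    RsetPart X f i ⊆ X := by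
  intro a ha
  exact (mem_RsetPart.1 ha).1

lemma disjoint_RsetPart {X : Finset α} {f : ↥X → Fin r} {i j : Fin r} (hij : i ≠ j) :
    Disjoint (RsetPart X f i) (RsetPart X f j) := by
  rw [Finset.disjoint_left]
  intro a hai haj
  obtain ⟨h₁, hf₁⟩ := mem_RsetPart.1 hai
  obtain ⟨h₂, hf₂⟩ := mem_RsetPart.1 haj
  exact hij (hf₁ ▸ hf₂ ▸ rfl)

lemma card_filter_coe_mem (X : Finset α) {R : Finset α} (hR : R ⊆ X) :
    ((univ : Finset ↥X).filter fun x : ↥X => (↑x : α) ∈ R).card = R.card := by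
  refine Finset.card_bij (fun (x : ↥X) _ => (x : α)) ?_ ?_ ?_
  · intro x hx; exact (mem_filter.1 hx).2
  · intro x₁ h₁ x₂ h₂ h; exact Subtype.ext h
  · intro b hb; exact ⟨⟨b, hR hb⟩, by simp [hb], rfl⟩

lemma card_fiber (X : Finset α) (i : Fin r) {R : Finset α} (hR : R ⊆ X) :
    ((univ : Finset (↥X → Fin r)).filter fun f => RsetPart X f i = R).card
      = (r - 1) ^ (X.card - R.card) := by
  classical
  have hset : ∀ f : ↥X → Fin r,
      RsetPart X f i = R ↔ ∀ x : ↥X, (f x = i ↔ (↑x : α) ∈ R) := by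
    intro f
    constructor
    · intro h x
      constructor
      · intro hfx
        rw [← h]
        exact mem_RsetPart.2 ⟨x.2, hfx⟩
      · intro hx
        rw [← h] at hx
        obtain ⟨h', hf⟩ := mem_RsetPart.1 hx
        exact hf
    · intro h
      ext a
      rw [mem_RsetPart]
      constructor
      · rintro ⟨ha, hf⟩; exact (h ⟨a, ha⟩).1 hf
      · intro haR; exact ⟨hR haR, (h ⟨a, hR haR⟩).2 haR⟩
  have heq : ((univ : Finset (↥X → Fin r)).filter fun f => RsetPart X f i = R)
      = Fintype.piFinset (fun x : ↥X => if (↑x : α) ∈ R then ({i} : Finset (Fin r)) else {i}ᶜ) := by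
    ext f
    simp only [mem_filter, mem_univ, true_and, Fintype.mem_piFinset, hset f]
    refine forall_congr' fun x => ?_
    by_cases hx : (↑x : α) ∈ R <;> simp [hx]
  rw [heq, Fintype.card_piFinset]
  have hcardeach : ∀ x : ↥X,
      (if (↑x : α) ∈ R then ({i} : Finset (Fin r)) else {i}ᶜ).card
        = if (↑x : α) ∈ R then 1 else r - 1 := by
    intro x
    by_cases hx : (↑x : α) ∈ R <;> simp [hx, Finset.card_compl]
  rw [Finset.prod_congr rfl fun x _ => hcardeach x, Finset.prod_ite, Finset.prod_const,
    Finset.prod_const, one_pow, one_mul]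
  congr 1
  have h1 : ((univ : Finset ↥X).filter fun x : ↥X => ¬ (↑x : α) ∈ R)
      = univ \ ((univ : Finset ↥X).filter fun x : ↥X => (↑x : α) ∈ R) := by
    rw [Finset.filter_not]
  rw [h1, Finset.card_sdiff_of_subset (Finset.filter_subset _ _), card_filter_coe_mem X hR,
    Finset.card_univ, Fintype.card_coe]

end Aux

/-- a κ-spread, (1/r,1/r)-satisfying family not containing ∅ contains
r pairwise disjoint sets.  The probability that a random set R (each element of X taken
independently with probability 1/r) contains a member of F is written out explicitly. -/
theorem satisfying_implies_disjoint {α : Type*} [DecidableEq α] (n r : ℕ)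
    (X : Finset α) (F : Finset (Finset α))
    (hsub : ∀ S ∈ F, S ⊆ X)
    (huniform : ∀ S ∈ F, S.card = n)
    (κ : ℝ) (hκ : 1 < κ)
    (hspread₁ : κ ^ n ≤ (F.card : ℝ))
    (hspread₂ : ∀ T ⊆ X, T.card ≤ n →
      (((F.filter (fun S => T ⊆ S)).card : ℝ) ≤ κ⁻¹ ^ T.card * F.card))
    (hne : (∅ : Finset α) ∉ F)
    (hsat : (∑ R ∈ X.powerset,
        (if ∃ S ∈ F, S ⊆ R then
          ((1 : ℝ) / r) ^ R.card * (1 - 1 / r) ^ (X.card - R.card) else 0))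
      > 1 - 1 / r) :
    ∃ G ⊆ F, G.card = r ∧ ∀ A ∈ G, ∀ B ∈ G, A ≠ B → Disjoint A B := by
  classical
  rcases Nat.eq_zero_or_pos r with hr0 | hr
  · exact ⟨∅, empty_subset F, by simp [hr0], by simp⟩
  -- notation
  set m := X.card with hm
  have hrR : (0 : ℝ) < (r : ℝ) := by exact_mod_cast hr
  have hrne : (r : ℝ) ≠ 0 := ne_of_gt hrR
  have hr1 : (1 : ℝ) ≤ (r : ℝ) := by exact_mod_cast hr
  -- the event
  set E : Finset α → Prop := fun R => ∃ S ∈ F, S ⊆ R with hE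
  -- the weight
  set w : Finset α → ℝ :=
    fun R => ((1 : ℝ) / r) ^ R.card * (1 - 1 / r) ^ (m - R.card) with hw
  -- key pointwise identity
  have hkey : ∀ R : Finset α, R ⊆ X →
      (((r - 1 : ℕ) : ℝ)) ^ (m - R.card) = (r : ℝ) ^ m * w R := by
    intro R hR
    have hk : R.card ≤ m := Finset.card_le_card hR
    have hcast : ((r - 1 : ℕ) : ℝ) = (r : ℝ) - 1 := by
      push_cast [Nat.cast_sub hr]; ring
    have h1 : (1 - 1 / (r : ℝ)) = ((r : ℝ) - 1) / r := by field_simp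
    rw [hcast, hw]
    simp only [h1, div_pow, one_div, inv_pow]
    rw [show (r : ℝ) ^ m = (r : ℝ) ^ R.card * (r : ℝ) ^ (m - R.card) by
      rw [← pow_add, Nat.add_sub_cancel' hk]]
    have h2 : ((r : ℝ) ^ R.card) ≠ 0 := pow_ne_zero _ hrne
    have h3 : ((r : ℝ) ^ (m - R.card)) ≠ 0 := pow_ne_zero _ hrne
    field_simp
    rw [div_pow, mul_div_assoc', mul_div_cancel_left₀ _ h3]
  -- bad sets of colourings
  set Bad : Fin r → Finset (↥X → Fin r) :=
    fun i => (univ : Finset (↥X → Fin r)).filter fun f => ¬ E (RsetPart X f i) with hBad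
  -- fibered counting of Bad i
  have hbadcard : ∀ i : Fin r, (Bad i).card
      = ∑ R ∈ X.powerset, if E R then 0 else (r - 1) ^ (m - R.card) := by
    intro i
    rw [Finset.card_eq_sum_card_fiberwise
      (f := fun f : ↥X → Fin r => RsetPart X f i) (t := X.powerset)
      (fun f _ => Finset.mem_powerset.2 RsetPart_subset)]
    refine Finset.sum_congr rfl fun R hR => ?_
    by_cases hER : E R
    · rw [if_pos hER]
      convert Finset.card_empty
      rw [Finset.eq_empty_iff_forall_notMem]
      intro f hf
      simp only [hBad, Finset.mem_filter, mem_univ, true_and] at hf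
      exact hf.1 (hf.2 ▸ hER)
    · rw [if_neg hER, ← card_fiber X i (Finset.mem_powerset.1 hR)]
      congr 1
      ext f
      simp only [hBad, Finset.mem_filter, mem_univ, true_and]
      constructor
      · rintro ⟨-, h⟩; exact h
      · intro h; exact ⟨h ▸ hER, h⟩
  -- total count
  have htot : (r : ℕ) ^ m = ∑ R ∈ X.powerset, (r - 1) ^ (m - R.card) := by
    have i₀ : Fin r := ⟨0, hr⟩
    have h1 : (univ : Finset (↥X → Fin r)).card = r ^ m := by
      rw [Finset.card_univ, Fintype.card_fun, Fintype.card_fin, Fintype.card_coe]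
    rw [← h1, Finset.card_eq_sum_card_fiberwise
      (f := fun f : ↥X → Fin r => RsetPart X f i₀) (t := X.powerset)
      (fun f _ => Finset.mem_powerset.2 RsetPart_subset)]
    exact Finset.sum_congr rfl fun R hR => card_fiber X i₀ (Finset.mem_powerset.1 hR)
  -- real version of total count
  have htotR : ((r : ℝ)) ^ m = ∑ R ∈ X.powerset, (r : ℝ) ^ m * w R := by
    calc ((r : ℝ)) ^ m = (((r : ℕ) ^ m : ℕ) : ℝ) := by push_cast; ring
    _ = ∑ R ∈ X.powerset, (((r - 1 : ℕ) : ℝ)) ^ (m - R.card) := by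
        rw [htot]; push_cast; ring
    _ = ∑ R ∈ X.powerset, (r : ℝ) ^ m * w R :=
        Finset.sum_congr rfl fun R hR => hkey R (Finset.mem_powerset.1 hR)
  -- bound on each Bad i
  have hbadR : ∀ i : Fin r, ((Bad i).card : ℝ) < (r : ℝ) ^ m * (1 / r) := by
    intro i
    have h1 : ((Bad i).card : ℝ)
        = ∑ R ∈ X.powerset, if E R then 0 else (r : ℝ) ^ m * w R := by
      rw [hbadcard i]
      push_cast
      refine Finset.sum_congr rfl fun R hR => ?_
      by_cases hER : E R
      · simp [hER]
      · simp only [hER, if_false]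
        exact_mod_cast hkey R (Finset.mem_powerset.1 hR)
    have h2 : ∀ R ∈ X.powerset,
        (if E R then 0 else (r : ℝ) ^ m * w R)
          = (r : ℝ) ^ m * w R - (r : ℝ) ^ m * (if E R then w R else 0) := by
      intro R hR
      by_cases hER : E R <;> simp [hER]
    rw [h1, Finset.sum_congr rfl h2, Finset.sum_sub_distrib, ← htotR, ← Finset.mul_sum]
    have hsat' : (∑ R ∈ X.powerset, if E R then w R else 0) > 1 - 1 / r := hsat
    have hpow : (0 : ℝ) < (r : ℝ) ^ m := pow_pos hrR m
    nlinarith [mul_lt_mul_of_pos_left hsat' hpow]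
  -- union bound: some colouring avoids all Bad i
  have hgood : ∃ f : ↥X → Fin r, ∀ i : Fin r, E (RsetPart X f i) := by
    by_contra hcon
    push_neg at hcon
    have hsubset : (univ : Finset (↥X → Fin r)) ⊆ univ.biUnion Bad := by
      intro f _
      obtain ⟨i, hi⟩ := hcon f
      exact Finset.mem_biUnion.2 ⟨i, mem_univ i, by
        simp only [hBad, Finset.mem_filter, mem_univ, true_and]; exact hi⟩
    have h1 : (r : ℕ) ^ m ≤ ∑ i : Fin r, (Bad i).card := by
      calc (r : ℕ) ^ m = (univ : Finset (↥X → Fin r)).card := by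
            rw [Finset.card_univ, Fintype.card_fun, Fintype.card_fin, Fintype.card_coe]
      _ ≤ (univ.biUnion Bad).card := Finset.card_le_card hsubset
      _ ≤ ∑ i : Fin r, (Bad i).card := Finset.card_biUnion_le
    have h2 : ((r : ℝ)) ^ m ≤ ∑ i : Fin r, ((Bad i).card : ℝ) := by
      exact_mod_cast h1
    have h3 : (∑ i : Fin r, ((Bad i).card : ℝ)) < ∑ i : Fin r, (r : ℝ) ^ m * (1 / r) := by
      refine Finset.sum_lt_sum_of_nonempty ?_ fun i _ => hbadR i
      exact Finset.univ_nonempty_iff.2 ⟨⟨0, hr⟩⟩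
    have h4 : (∑ i : Fin r, (r : ℝ) ^ m * (1 / r)) = (r : ℝ) ^ m := by
      rw [Finset.sum_const, Finset.card_univ, Fintype.card_fin, nsmul_eq_mul]
      field_simp
    linarith
  -- extract the disjoint sets
  obtain ⟨f, hf⟩ := hgood
  choose S hSF hSsub using hf
  have hSne : ∀ i, (S i).Nonempty := by
    intro i
    rcases Finset.eq_empty_or_nonempty (S i) with h | h
    · exact absurd (h ▸ hSF i) hne
    · exact h
  have hSinj : Function.Injective S := by
    intro i j hij
    by_contra hne'
    have hdisj : Disjoint (RsetPart X f i) (RsetPart X f j) := disjoint_RsetPart hne'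
    have : Disjoint (S i) (S j) :=
      hdisj.mono (hSsub i) (hSsub j)
    rw [hij, disjoint_self] at this
    exact absurd (this ▸ hSF j) (by simpa [this] using hne)
  refine ⟨(univ : Finset (Fin r)).image S, ?_, ?_, ?_⟩
  · intro A hA
    obtain ⟨i, _, rfl⟩ := Finset.mem_image.1 hA
    exact hSF i
  · rw [Finset.card_image_of_injective _ hSinj, Finset.card_univ, Fintype.card_fin]
  · intro A hA B hB hAB
    obtain ⟨i, _, rfl⟩ := Finset.mem_image.1 hA
    obtain ⟨j, _, rfl⟩ := Finset.mem_image.1 hB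
    have hij : i ≠ j := fun h => hAB (h ▸ rfl)
    exact (disjoint_RsetPart hij).mono (hSsub i) (hSsub j)
end

section
/- Let F be a d-intersecting n-uniform family over a ground set X with |X| = x, and 0 < p < 1 with px an integer. Call a pair (W, S) with W ⊆ X, |W| = px, S ∈ F bad (at level d) if no S' ∈ F satisfies S' \ W ⊆ S \ W and |S' \ W| ≤ d. Then the number of bad pairs (W, S) is at most (2/p)^n · C(x, px). -/
/-- the number of bad pairs (W, S), with W a px-subset of X and S ∈ F such that
no S' ∈ F has S' \ W ⊆ S \ W and |S' \ W| ≤ d, is at most (2/p)^n · C(x, px). -/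
theorem bad_pairs_bound {α : Type*} [DecidableEq α] (n d x w : ℕ) (p : ℝ)
    (hp₀ : 0 < p) (hp₁ : p < 1) (hw : (w : ℝ) = p * x)
    (X : Finset α) (hx : X.card = x)
    (F : Finset (Finset α)) (hsub : ∀ S ∈ F, S ⊆ X)
    (huniform : ∀ S ∈ F, S.card = n)
    (hd : ∀ S ∈ F, ∀ S' ∈ F, S ≠ S' → (S ∩ S').card ≤ d) :
    (∑ W ∈ X.powerset.filter (fun W => W.card = w),
        ((F.filter (fun S =>
          ¬ ∃ S' ∈ F, S' \ W ⊆ S \ W ∧ (S' \ W).card ≤ d)).card : ℝ))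
      ≤ (2 / p) ^ n * (x.choose w) := by
  classical
  rcases Nat.eq_zero_or_pos x with hx0 | hxpos
  · -- degenerate case: X is empty, every member of F is empty, no pair is bad
    subst hx0
    have hX : X = ∅ := Finset.card_eq_zero.mp hx
    have hzero : ∀ W ∈ X.powerset.filter (fun W => W.card = w),
        ((F.filter (fun S =>
          ¬ ∃ S' ∈ F, S' \ W ⊆ S \ W ∧ (S' \ W).card ≤ d)).card : ℝ) = 0 := by
      intro W _
      norm_num [Finset.filter_eq_empty_iff]
      intro S hS
      have hSempty : S = ∅ := Finset.subset_empty.mp (hX ▸ hsub S hS)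
      exact ⟨S, hS, by simp [hSempty], by simp [hSempty]⟩
    rw [Finset.sum_congr rfl hzero]
    simp only [Finset.sum_const_zero]
    positivity
  -- main case : x > 0
  have hxR : (0:ℝ) < x := by exact_mod_cast hxpos
  have hwR : (0:ℝ) < w := by rw [hw]; exact mul_pos hp₀ hxR
  have hwpos : 0 < w := by exact_mod_cast hwR
  have hwxR : (w:ℝ) < x := by
    rw [hw]; nlinarith
  have hwx : w < x := by exact_mod_cast hwxR
  set r : ℝ := (1 - p) / p with hr
  have hrpos : 0 < r := by rw [hr]; exact div_pos (by linarith) hp₀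
  have hrw : r * w = (x:ℝ) - w := by
    rw [hw, hr, div_mul_eq_mul_div, div_eq_iff hp₀.ne']; ring
  -- key: for a bad pair (W, S), S is the only member of F contained in W ∪ S
  have key : ∀ W S, S ∈ F →
      (¬ ∃ S' ∈ F, S' \ W ⊆ S \ W ∧ (S' \ W).card ≤ d) →
      ∀ S' ∈ F, S' ⊆ W ∪ S → S' = S := by
    intro W S hS hbad S' hS' hsub'
    by_contra hne
    have h1 : S' \ W ⊆ S \ W := by
      intro a ha
      rw [Finset.mem_sdiff] at ha ⊢
      rcases Finset.mem_union.mp (hsub' ha.1) with h | h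
      · exact absurd h ha.2
      · exact ⟨h, ha.2⟩
    have h2 : ¬ (S' \ W).card ≤ d := fun hle => hbad ⟨S', hS', h1, hle⟩
    have h3 : S' \ W ⊆ S ∩ S' := fun a ha =>
      Finset.mem_inter.mpr ⟨(Finset.mem_sdiff.mp (h1 ha)).1, (Finset.mem_sdiff.mp ha).1⟩
    exact h2 (le_trans (Finset.card_le_card h3) (hd S hS S' hS' (Ne.symm hne)))
  -- the canonical member of F inside U
  let sU : Finset α → Finset α := fun U =>
    if h : ∃ S ∈ F, S ⊆ U then h.choose else ∅
  have hsU_card : ∀ U, (sU U).card ≤ n := by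
    intro U
    by_cases h : ∃ S ∈ F, S ⊆ U
    · simp only [sU, dif_pos h]
      exact le_of_eq (huniform _ h.choose_spec.1)
    · simp [sU, dif_neg h]
  have hsU_eq : ∀ W S, S ∈ F →
      (¬ ∃ S' ∈ F, S' \ W ⊆ S \ W ∧ (S' \ W).card ≤ d) →
      sU (W ∪ S) = S := by
    intro W S hS hbad
    have hex : ∃ S' ∈ F, S' ⊆ W ∪ S := ⟨S, hS, Finset.subset_union_right⟩
    simp only [sU, dif_pos hex]
    exact key W S hS hbad _ hex.choose_spec.1 hex.choose_spec.2
  -- the natural-number counting bound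
  have main : ∑ W ∈ X.powerset.filter (fun W => W.card = w),
      (F.filter (fun S =>
        ¬ ∃ S' ∈ F, S' \ W ⊆ S \ W ∧ (S' \ W).card ≤ d)).card
      ≤ ∑ k ∈ Finset.range (n+1), x.choose (w + k) * n.choose k := by
    rw [← Finset.card_sigma]
    set B := (X.powerset.filter (fun W => W.card = w)).sigma
      (fun W => F.filter (fun S =>
        ¬ ∃ S' ∈ F, S' \ W ⊆ S \ W ∧ (S' \ W).card ≤ d)) with hB
    have hmemB : ∀ q ∈ B, q.1 ⊆ X ∧ q.1.card = w ∧ q.2 ∈ F ∧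
        (¬ ∃ S' ∈ F, S' \ q.1 ⊆ q.2 \ q.1 ∧ (S' \ q.1).card ≤ d) := by
      intro q hq
      rw [hB, Finset.mem_sigma, Finset.mem_filter, Finset.mem_filter,
        Finset.mem_powerset] at hq
      exact ⟨hq.1.1, hq.1.2, hq.2.1, hq.2.2⟩
    have hfib : ∀ q ∈ B, (q.2 \ q.1).card ∈ Finset.range (n+1) := by
      intro q hq
      obtain ⟨_, _, hF, _⟩ := hmemB q hq
      rw [Finset.mem_range, Nat.lt_succ_iff]
      exact le_trans (Finset.card_le_card (Finset.sdiff_subset)) (le_of_eq (huniform _ hF))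
    rw [Finset.card_eq_sum_card_fiberwise hfib]
    apply Finset.sum_le_sum
    intro k _
    -- inject the fibre into pairs (U, T), T ⊆ sU U
    have : ((B.filter (fun q => (q.2 \ q.1).card = k)).card)
        ≤ ((X.powersetCard (w + k)).sigma (fun U => (sU U).powersetCard k)).card := by
      apply Finset.card_le_card_of_injOn (fun q => ⟨q.1 ∪ q.2, q.2 \ q.1⟩)
      · intro q hq
        rw [Finset.mem_coe, Finset.mem_filter] at hq
        obtain ⟨hWX, hWcard, hSF, hbad⟩ := hmemB q hq.1
        rw [Finset.mem_coe, Finset.mem_sigma, Finset.mem_powersetCard]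
        refine ⟨⟨Finset.union_subset hWX (hsub _ hSF), ?_⟩, ?_⟩
        · show (q.1 ∪ q.2).card = w + k
          have hcc := Finset.card_sdiff_add_card q.2 q.1
          rw [Finset.union_comm q.2 q.1] at hcc
          omega
        · rw [Finset.mem_powersetCard, hsU_eq q.1 q.2 hSF hbad]
          exact ⟨Finset.sdiff_subset, hq.2⟩
      · rintro ⟨W, S⟩ hq ⟨W', S'⟩ hq' heq
        simp only [Finset.coe_filter, Set.mem_setOf_eq] at hq hq'
        obtain ⟨hWX, hWcard, hSF, hbad⟩ := hmemB _ hq.1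
        obtain ⟨hWX', hWcard', hSF', hbad'⟩ := hmemB _ hq'.1
        simp only [Sigma.mk.inj_iff, heq_eq_eq] at heq
        obtain ⟨hU, hT⟩ := heq
        have hWW : W = W' := by
          have e1 : W = (W ∪ S) \ (S \ W) := by
            ext a
            simp only [Finset.mem_sdiff, Finset.mem_union]
            tauto
          have e2 : W' = (W' ∪ S') \ (S' \ W') := by
            ext a
            simp only [Finset.mem_sdiff, Finset.mem_union]
            tauto
          rw [e1, e2, hU, hT]
        subst hWW
        have hSS : S' = S := key W S hSF hbad S' hSF' (hU ▸ Finset.subset_union_right)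
        simp [hSS]
    refine le_trans this ?_
    rw [Finset.card_sigma]
    have hb : ∀ U ∈ X.powersetCard (w + k), ((sU U).powersetCard k).card ≤ n.choose k := by
      intro U _
      rw [Finset.card_powersetCard]
      exact Nat.choose_le_choose k (hsU_card U)
    calc ∑ U ∈ X.powersetCard (w + k), ((sU U).powersetCard k).card
        ≤ ∑ _U ∈ X.powersetCard (w + k), n.choose k := Finset.sum_le_sum hb
      _ = x.choose (w + k) * n.choose k := by
          rw [Finset.sum_const, Finset.card_powersetCard, hx, smul_eq_mul]
  -- real-valued estimate on the binomial coefficients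
  have hchoose : ∀ k, (x.choose (w + k) : ℝ) ≤ x.choose w * r ^ k := by
    intro k
    induction k with
    | zero => simp
    | succ k ih =>
      show (x.choose (w + k + 1) : ℝ) ≤ x.choose w * r ^ (k + 1)
      by_cases h : w + k < x
      · have hpos : (0:ℝ) < (w:ℝ) + k + 1 := by positivity
        have hkx : ((w:ℝ) + k) < x := by exact_mod_cast h
        have e : (x.choose (w + k + 1) : ℝ) * ((w:ℝ) + k + 1)
            = (x.choose (w + k) : ℝ) * ((x:ℝ) - w - k) := by
          have h1 : ((x - (w + k) : ℕ) : ℝ) = (x:ℝ) - w - k := by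
            rw [Nat.cast_sub h.le]; push_cast; ring
          calc (x.choose (w + k + 1) : ℝ) * ((w:ℝ) + k + 1)
              = ((x.choose (w + k + 1) * (w + k + 1) : ℕ) : ℝ) := by push_cast; ring
            _ = ((x.choose (w + k) * (x - (w + k)) : ℕ) : ℝ) := by
                rw [Nat.choose_succ_right_eq x (w + k)]
            _ = (x.choose (w + k) : ℝ) * ((x:ℝ) - w - k) := by rw [Nat.cast_mul, h1]
        have hration : ((x:ℝ) - w - k) / ((w:ℝ) + k + 1) ≤ r := by
          rw [div_le_iff₀ hpos]
          nlinarith [hrw, hrpos.le]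
        have hrat0 : (0:ℝ) ≤ ((x:ℝ) - w - k) / ((w:ℝ) + k + 1) := by
          apply div_nonneg _ hpos.le
          linarith
        have e2 : (x.choose (w + k + 1) : ℝ)
            = (x.choose (w + k) : ℝ) * (((x:ℝ) - w - k) / ((w:ℝ) + k + 1)) := by
          rw [← mul_div_assoc]
          exact (eq_div_iff hpos.ne').mpr e
        rw [e2, pow_succ, ← mul_assoc]
        exact mul_le_mul ih hration hrat0 (by positivity)
      · have : x < w + (k + 1) := by omega
        rw [Nat.choose_eq_zero_of_lt (by omega : x < w + k + 1)]
        simp only [Nat.cast_zero]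
        positivity
  -- put everything together
  have hcast : (∑ W ∈ X.powerset.filter (fun W => W.card = w),
        ((F.filter (fun S =>
          ¬ ∃ S' ∈ F, S' \ W ⊆ S \ W ∧ (S' \ W).card ≤ d)).card : ℝ))
      ≤ ∑ k ∈ Finset.range (n+1), (x.choose (w + k) : ℝ) * n.choose k := by
    have := Nat.cast_le (α := ℝ) |>.mpr main
    push_cast at this
    convert this using 2
  refine le_trans hcast ?_
  have step2 : ∑ k ∈ Finset.range (n+1), (x.choose (w + k) : ℝ) * n.choose k
      ≤ (x.choose w : ℝ) * ∑ k ∈ Finset.range (n+1), r ^ k * n.choose k := by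
    rw [Finset.mul_sum]
    apply Finset.sum_le_sum
    intro k _
    have := hchoose k
    have h2 : (0:ℝ) ≤ (n.choose k : ℝ) := by positivity
    nlinarith
  refine le_trans step2 ?_
  have hbin : ∑ k ∈ Finset.range (n+1), r ^ k * (n.choose k : ℝ) = (r + 1) ^ n := by
    rw [add_pow]
    apply Finset.sum_congr rfl
    intro k _
    rw [one_pow, mul_one]
  rw [hbin]
  have hr1 : r + 1 = 1 / p := by
    rw [hr]; field_simp; ring
  rw [hr1]
  have hle : (1 / p) ^ n ≤ (2 / p) ^ n := by
    have h12 : (1:ℝ) / p ≤ 2 / p := by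
      rw [div_le_div_iff₀ hp₀ hp₀]; nlinarith
    exact pow_le_pow_left₀ (by positivity) h12 n
  calc (x.choose w : ℝ) * (1 / p) ^ n
      ≤ (x.choose w : ℝ) * (2 / p) ^ n := by
        apply mul_le_mul_of_nonneg_left hle (by positivity)
    _ = (2 / p) ^ n * (x.choose w : ℝ) := mul_comm _ _
end

section
/- For integers x, n ≥ 1 and 0 < p ≤ 1/2 with px an integer, we have the bound ∑_{i=0}^{n} C(x, px + i) ≤ p^{-n} · C(x, px). -/
/-- ∑_{i=0}^{n} C(x, px+i) ≤ p^{-n} · C(x, px) for 0 < p ≤ 1/2, px integral. -/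
theorem choose_sum_bound (x n w : ℕ) (p : ℝ)
    (hx : 1 ≤ x) (hn : 1 ≤ n)
    (hp₀ : 0 < p) (hp₁ : p ≤ 1 / 2) (hw : (w : ℝ) = p * x) :
    (∑ i ∈ Finset.range (n + 1), (x.choose (w + i) : ℝ)) ≤ p⁻¹ ^ n * x.choose w := by
  set r : ℝ := (1 - p) / p with hr
  have hxpos : (0 : ℝ) < x := by exact_mod_cast hx
  have hw1 : 1 ≤ w := by
    by_contra h
    push_neg at h
    interval_cases w
    simp at hw
    rcases hw with h | h
    · linarith
    · omega
  have hwpos : (0 : ℝ) < w := by exact_mod_cast hw1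
  have hr1 : (1 : ℝ) ≤ r := by
    rw [hr, le_div_iff₀ hp₀]
    linarith
  have hr0 : (0 : ℝ) ≤ r := by linarith
  have hrw : r = ((x : ℝ) - w) / w := by
    rw [hr, hw]
    field_simp
  -- main inequality: C(x, w+i) ≤ r^i * C(x, w)
  have key : ∀ i : ℕ, (x.choose (w + i) : ℝ) ≤ r ^ i * x.choose w := by
    intro i
    induction i with
    | zero => simp
    | succ i ih =>
      have step : (x.choose (w + i + 1) : ℝ) ≤ r * x.choose (w + i) := by
        by_cases hcase : x ≤ w + i
        · have : x.choose (w + i + 1) = 0 := Nat.choose_eq_zero_of_lt (by omega)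
          rw [this]
          push_cast
          positivity
        · push_neg at hcase
          have hid : (x.choose (w + i + 1) : ℝ) * (w + i + 1) =
              x.choose (w + i) * ((x : ℝ) - (w + i)) := by
            have := Nat.add_one_mul_choose_eq x (w + i)
            -- (x+1).choose (w+i+1) * (w+i+1) = ... not the right one; use choose_succ_right_eq
            have h2 := Nat.choose_succ_right_eq x (w + i)
            have hcast := congrArg (Nat.cast : ℕ → ℝ) h2
            push_cast [Nat.cast_sub (le_of_lt hcase)] at hcast
            convert hcast using 2 <;> push_cast <;> ring
          have hwi1 : (0 : ℝ) < (w : ℝ) + i + 1 := by positivity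
          have hchoose : (x.choose (w + i + 1) : ℝ)
              = x.choose (w + i) * (((x : ℝ) - (w + i)) / ((w : ℝ) + i + 1)) := by
            field_simp
            linarith [hid]
          rw [hchoose, hrw]
          have hnn : (0 : ℝ) ≤ (x.choose (w + i) : ℝ) := by positivity
          rw [mul_comm (((x : ℝ) - ↑w) / ↑w) _]
          apply mul_le_mul_of_nonneg_left _ hnn
          rw [div_le_div_iff₀ hwi1 hwpos]
          have hxw : (w : ℝ) + i ≤ x := by
            have : w + i ≤ x := le_of_lt hcase
            exact_mod_cast this
          nlinarith
      calc (x.choose (w + (i + 1)) : ℝ) = x.choose (w + i + 1) := by ring_nf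
        _ ≤ r * x.choose (w + i) := step
        _ ≤ r * (r ^ i * x.choose w) := by
            apply mul_le_mul_of_nonneg_left ih hr0
        _ = r ^ (i + 1) * x.choose w := by ring
  have hsum : (∑ i ∈ Finset.range (n + 1), (x.choose (w + i) : ℝ))
      ≤ (∑ i ∈ Finset.range (n + 1), r ^ i) * x.choose w := by
    rw [Finset.sum_mul]
    exact Finset.sum_le_sum fun i _ => key i
  have hgeo : (∑ i ∈ Finset.range (n + 1), r ^ i) ≤ (r + 1) ^ n := by
    have := add_pow r 1 n
    simp only [one_pow, mul_one] at this
    rw [this]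
    apply Finset.sum_le_sum
    intro i hi
    have h1 : (1 : ℝ) ≤ (n.choose i : ℝ) := by
      have : 1 ≤ n.choose i := Nat.choose_pos (by
        exact Nat.lt_succ_iff.mp (Finset.mem_range.mp hi))
      exact_mod_cast this
    nlinarith [pow_nonneg hr0 i]
  have hrp : r + 1 = p⁻¹ := by
    rw [hr]
    field_simp
    ring
  calc (∑ i ∈ Finset.range (n + 1), (x.choose (w + i) : ℝ))
      ≤ (∑ i ∈ Finset.range (n + 1), r ^ i) * x.choose w := hsum
    _ ≤ (r + 1) ^ n * x.choose w := by
        apply mul_le_mul_of_nonneg_right hgeo (by positivity)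
    _ = p⁻¹ ^ n * x.choose w := by rw [hrp]
end

section
/- Let F be a d-intersecting n-uniform family over X with |X| = x and p ∈ (0,1) with px integral. For W drawn uniformly from the px-subsets of X, let S(W) = {S ∈ F : (W,S) is a bad pair at level d}. Then for any δ > 0, the probability that |S(W)| ≥ δ|F| is at most (2/p)^n / (δ |F|). -/
/-- Auxiliary: ratio bound for binomial coefficients, in `ℕ`:
`C(x, w+t) * w^t ≤ C(x, w) * (x-w)^t`. -/
lemma choose_mul_pow_le (x w : ℕ) (t : ℕ) :
    x.choose (w + t) * w ^ t ≤ x.choose w * (x - w) ^ t := by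
  induction t with
  | zero => simp
  | succ t ih =>
    have h1 : x.choose (w + t + 1) * (w + t + 1) = x.choose (w + t) * (x - (w + t)) :=
      Nat.choose_succ_right_eq x (w + t)
    have key : x.choose (w + t + 1) * w ≤ x.choose (w + t) * (x - w) := by
      apply Nat.le_of_mul_le_mul_right _ (Nat.succ_pos (w + t))
      calc x.choose (w + t + 1) * w * (w + t + 1)
          = x.choose (w + t + 1) * (w + t + 1) * w := by ring
        _ = x.choose (w + t) * (x - (w + t)) * w := by rw [h1]
        _ ≤ x.choose (w + t) * ((x - w) * (w + t + 1)) := by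
            rw [mul_assoc]
            refine Nat.mul_le_mul_left _ (Nat.mul_le_mul ?_ ?_)
            · omega
            · omega
        _ = x.choose (w + t) * (x - w) * (w + t + 1) := by ring
    calc x.choose (w + (t + 1)) * w ^ (t + 1)
        = x.choose (w + t + 1) * w * w ^ t := by ring_nf
      _ ≤ x.choose (w + t) * (x - w) * w ^ t := Nat.mul_le_mul_right _ key
      _ = x.choose (w + t) * w ^ t * (x - w) := by ring
      _ ≤ x.choose w * (x - w) ^ t * (x - w) := Nat.mul_le_mul_right _ ih
      _ = x.choose w * (x - w) ^ (t + 1) := by ring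

/-- for W uniform among px-subsets of X, the probability that the number of
bad sets S(W) = {S ∈ F : (W,S) bad at level d} is at least δ|F| is at most (2/p)^n/(δ|F|). -/
theorem markov_bad_sets {α : Type*} [DecidableEq α] (n d x w : ℕ) (p δ : ℝ)
    (hp₀ : 0 < p) (hp₁ : p < 1) (hδ : 0 < δ) (hw : (w : ℝ) = p * x)
    (X : Finset α) (hx : X.card = x)
    (F : Finset (Finset α)) (hFne : F.Nonempty) (hsub : ∀ S ∈ F, S ⊆ X)
    (huniform : ∀ S ∈ F, S.card = n)
    (hd : ∀ S ∈ F, ∀ S' ∈ F, S ≠ S' → (S ∩ S').card ≤ d) :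
    ((X.powerset.filter (fun W => W.card = w ∧
        δ * F.card ≤ ((F.filter (fun S =>
          ¬ ∃ S' ∈ F, S' \ W ⊆ S \ W ∧ (S' \ W).card ≤ d)).card : ℝ))).card : ℝ)
      / (x.choose w)
    ≤ (2 / p) ^ n / (δ * F.card) := by
  classical
  have hFcard : (1:ℝ) ≤ F.card := by exact_mod_cast Finset.card_pos.2 hFne
  have hδF : 0 < δ * F.card := mul_pos hδ (lt_of_lt_of_le one_pos hFcard)
  have hwx : w ≤ x := by
    rcases Nat.eq_zero_or_pos x with h0 | hxpos
    · have : (w:ℝ) = 0 := by rw [hw, h0]; simp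
      have : w = 0 := by exact_mod_cast this
      omega
    · have hxR : (0:ℝ) < x := by exact_mod_cast hxpos
      have : (w:ℝ) < x := by rw [hw]; nlinarith
      exact_mod_cast this.le
  have hCpos : 0 < ((x.choose w : ℕ) : ℝ) := by exact_mod_cast Nat.choose_pos hwx
  -- the set of `W`'s and the bad sets for each `W`
  set A : Finset (Finset α) := X.powersetCard w with hA
  set badF : Finset α → Finset (Finset α) := fun W => F.filter (fun S =>
          ¬ ∃ S' ∈ F, S' \ W ⊆ S \ W ∧ (S' \ W).card ≤ d) with hbadF
  -- STEP 1 (counting bad pairs): the encoding argument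
  have hcount : ∑ W ∈ A, (badF W).card
      ≤ ∑ t ∈ Finset.Icc 1 n, x.choose (w + t) * n.choose t := by
    rw [← Finset.card_sigma]
    set P : Finset α → Finset α → Prop := fun U T =>
      ∃ S ∈ F, S ⊆ U ∧ T ⊆ S ∧ ∀ S' ∈ F, S' ⊆ U → S' = S with hP
    set Tgt : Finset ((_ : ℕ) × (_ : Finset α) × Finset α) :=
      (Finset.Icc 1 n).sigma (fun t => (X.powersetCard (w + t)).sigma
        (fun U => (X.powersetCard t).filter (fun T => P U T))) with hTgt
    have hinto : (A.sigma badF).card ≤ Tgt.card := by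
      apply Finset.card_le_card_of_injOn
        (fun z => (⟨(z.2 \ z.1).card, z.1 ∪ z.2, z.2 \ z.1⟩ : (_ : ℕ) × (_ : Finset α) × Finset α))
      · -- maps into target
        rintro ⟨W, S⟩ hz
        dsimp only
        rw [Finset.mem_coe, Finset.mem_sigma] at hz
        dsimp only at hz
        obtain ⟨hWA, hSbad⟩ := hz
        rw [hA, Finset.mem_powersetCard] at hWA
        obtain ⟨hWX, hWcard⟩ := hWA
        rw [hbadF, Finset.mem_filter] at hSbad
        obtain ⟨hSF, hbad⟩ := hSbad
        have hSX : S ⊆ X := hsub S hSF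
        have hSn : S.card = n := huniform S hSF
        have htd : d + 1 ≤ (S \ W).card := by
          by_contra hcon
          exact hbad ⟨S, hSF, subset_rfl, by omega⟩
        have htn : (S \ W).card ≤ n := hSn ▸ Finset.card_le_card (Finset.sdiff_subset)
        have hUcard : (W ∪ S).card = w + (S \ W).card := by
          have := Finset.card_sdiff_add_card S W
          rw [Finset.union_comm] at this
          omega
        have huniq : ∀ S' ∈ F, S' ⊆ W ∪ S → S' = S := by
          intro S' hS'F hS'U
          by_contra hne
          have h1 : S' \ W ⊆ S \ W := by
            intro a ha
            rw [Finset.mem_sdiff] at ha ⊢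
            refine ⟨?_, ha.2⟩
            have := hS'U ha.1
            rw [Finset.mem_union] at this
            tauto
          have h2 : ¬ (S' \ W).card ≤ d := fun hle => hbad ⟨S', hS'F, h1, hle⟩
          have h3 : S' \ W ⊆ S' ∩ S := by
            intro a ha
            rw [Finset.mem_inter]
            exact ⟨(Finset.mem_sdiff.1 ha).1, (Finset.mem_sdiff.1 (h1 ha)).1⟩
          have h4 : (S' ∩ S).card ≤ d := hd S' hS'F S hSF hne
          have := Finset.card_le_card h3
          omega
        rw [hTgt, Finset.mem_coe, Finset.mem_sigma, Finset.mem_sigma, Finset.mem_filter]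
        refine ⟨Finset.mem_Icc.mpr ⟨(by omega : 1 ≤ (S \ W).card), htn⟩, ?_, ?_, ?_⟩
        · rw [Finset.mem_powersetCard]
          exact ⟨Finset.union_subset hWX hSX, hUcard⟩
        · rw [Finset.mem_powersetCard]
          exact ⟨(Finset.sdiff_subset).trans hSX, rfl⟩
        · exact ⟨S, hSF, Finset.subset_union_right, Finset.sdiff_subset, huniq⟩
      · -- injectivity
        rintro ⟨W₁, S₁⟩ hz₁ ⟨W₂, S₂⟩ hz₂ heq
        simp only [Finset.coe_sigma, Set.mem_sigma_iff] at hz₁ hz₂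
        have hU : W₁ ∪ S₁ = W₂ ∪ S₂ := congrArg (fun z => z.2.1) heq
        have hT : S₁ \ W₁ = S₂ \ W₂ := congrArg (fun z => z.2.2) heq
        obtain ⟨hW₁A, hS₁bad⟩ := hz₁
        obtain ⟨hW₂A, hS₂bad⟩ := hz₂
        rw [hA, Finset.mem_coe, Finset.mem_powersetCard] at hW₁A hW₂A
        rw [hbadF, Finset.mem_coe, Finset.mem_filter] at hS₁bad hS₂bad
        have hWrec : ∀ (W S : Finset α), (W ∪ S) \ (S \ W) = W := by
          intro W S
          ext a
          simp only [Finset.mem_sdiff, Finset.mem_union]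
          tauto
        have hW : W₁ = W₂ := by
          have e1 := hWrec W₁ S₁
          have e2 := hWrec W₂ S₂
          rw [hU, hT] at e1
          rw [e2] at e1
          exact e1.symm
        -- uniqueness of S over U₁ = W₁ ∪ S₁
        have hS : S₁ = S₂ := by
          obtain ⟨hS₁F, hbad₁⟩ := hS₁bad
          obtain ⟨hS₂F, hbad₂⟩ := hS₂bad
          by_contra hne
          have hS₂U : S₂ ⊆ W₁ ∪ S₁ := by rw [hU]; exact Finset.subset_union_right
          have h1 : S₂ \ W₁ ⊆ S₁ \ W₁ := by
            intro a ha
            rw [Finset.mem_sdiff] at ha ⊢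
            refine ⟨?_, ha.2⟩
            have := hS₂U ha.1
            rw [Finset.mem_union] at this
            tauto
          have h2 : ¬ (S₂ \ W₁).card ≤ d := fun hle => hbad₁ ⟨S₂, hS₂F, h1, hle⟩
          have h3 : S₂ \ W₁ ⊆ S₂ ∩ S₁ := by
            intro a ha
            rw [Finset.mem_inter]
            exact ⟨(Finset.mem_sdiff.1 ha).1, (Finset.mem_sdiff.1 (h1 ha)).1⟩
          have h4 : (S₂ ∩ S₁).card ≤ d := hd S₂ hS₂F S₁ hS₁F (Ne.symm hne)
          have := Finset.card_le_card h3
          omega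
        rw [hW, hS]
    refine hinto.trans ?_
    rw [hTgt, Finset.card_sigma]
    apply Finset.sum_le_sum
    intro t ht
    rw [Finset.card_sigma]
    have hper : ∀ U ∈ X.powersetCard (w + t),
        ((X.powersetCard t).filter (fun T => P U T)).card ≤ n.choose t := by
      intro U hU
      rcases Finset.eq_empty_or_nonempty ((X.powersetCard t).filter (fun T => P U T)) with he | hne
      · rw [he]; simp
      · obtain ⟨T₀, hT₀⟩ := hne
        rw [Finset.mem_filter] at hT₀
        obtain ⟨-, S₀, hS₀F, hS₀U, -, huniq₀⟩ := hT₀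
        have hsub' : ((X.powersetCard t).filter (fun T => P U T)) ⊆ S₀.powersetCard t := by
          intro T hT
          rw [Finset.mem_filter] at hT
          obtain ⟨hTX, S₁, hS₁F, hS₁U, hTS₁, huniq₁⟩ := hT
          have : S₀ = S₁ := huniq₁ S₀ hS₀F hS₀U
          rw [Finset.mem_powersetCard]
          exact ⟨this ▸ hTS₁, (Finset.mem_powersetCard.1 hTX).2⟩
        calc ((X.powersetCard t).filter (fun T => P U T)).card
            ≤ (S₀.powersetCard t).card := Finset.card_le_card hsub'
          _ = n.choose t := by rw [Finset.card_powersetCard, huniform S₀ hS₀F]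
    calc ∑ U ∈ X.powersetCard (w + t), ((X.powersetCard t).filter (fun T => P U T)).card
        ≤ ∑ _U ∈ X.powersetCard (w + t), n.choose t := Finset.sum_le_sum hper
      _ = x.choose (w + t) * n.choose t := by
          rw [Finset.sum_const, smul_eq_mul, Finset.card_powersetCard, hx]
  -- STEP 2: the real-number bound on the encoding count
  have hkey : ((∑ W ∈ A, (badF W).card : ℕ) : ℝ) ≤ (2 / p) ^ n * (x.choose w) := by
    have h2p : (0:ℝ) < 2 / p := by positivity
    rcases Nat.eq_zero_or_pos n with hn0 | hnpos
    · subst hn0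
      have : Finset.Icc 1 0 = (∅ : Finset ℕ) := by decide
      rw [this] at hcount
      simp only [Finset.sum_empty, Nat.le_zero] at hcount
      rw [hcount]
      simp only [Nat.cast_zero]
      positivity
    -- n ≥ 1 : then x ≥ 1 and w ≥ 1
    have hxpos : 0 < x := by
      obtain ⟨S, hS⟩ := hFne
      have := Finset.card_le_card (hsub S hS)
      rw [huniform S hS, hx] at this
      omega
    have hxR : (0:ℝ) < x := by exact_mod_cast hxpos
    have hwpos : 0 < w := by
      by_contra hcon
      have hw0 : w = 0 := by omega
      rw [hw0] at hw
      have : p * x > 0 := by positivity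
      simp only [Nat.cast_zero] at hw
      linarith [hw ▸ this]
    have hwR : (0:ℝ) < w := by exact_mod_cast hwpos
    set q : ℝ := ((x:ℝ) - w) / w with hq
    have hq0 : 0 ≤ q := by
      apply div_nonneg _ hwR.le
      have : (w:ℝ) ≤ x := by exact_mod_cast hwx
      linarith
    have hchoose : ∀ t : ℕ, ((x.choose (w + t) : ℕ) : ℝ) ≤ (x.choose w) * q ^ t := by
      intro t
      have hnat := choose_mul_pow_le x w t
      have hR : ((x.choose (w + t) : ℕ) : ℝ) * (w:ℝ) ^ t
          ≤ ((x.choose w : ℕ) : ℝ) * ((x:ℝ) - w) ^ t := by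
        have hcast : (((x - w : ℕ)) : ℝ) = (x:ℝ) - w := by
          rw [Nat.cast_sub hwx]
        calc ((x.choose (w + t) : ℕ) : ℝ) * (w:ℝ) ^ t
            = ((x.choose (w + t) * w ^ t : ℕ) : ℝ) := by push_cast; ring
          _ ≤ ((x.choose w * (x - w) ^ t : ℕ) : ℝ) := by exact_mod_cast hnat
          _ = ((x.choose w : ℕ) : ℝ) * ((x:ℝ) - w) ^ t := by push_cast [hcast]; ring
      have hwt : (0:ℝ) < (w:ℝ) ^ t := by positivity
      rw [hq, div_pow, ← mul_div_assoc, le_div_iff₀ hwt]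
      exact hR
    have hqp : q + 1 = 1 / p := by
      rw [hq]
      have hwne : (w:ℝ) ≠ 0 := ne_of_gt hwR
      field_simp
      rw [hw]
      ring
    calc ((∑ W ∈ A, (badF W).card : ℕ) : ℝ)
        ≤ ((∑ t ∈ Finset.Icc 1 n, x.choose (w + t) * n.choose t : ℕ) : ℝ) := by
          exact_mod_cast hcount
      _ = ∑ t ∈ Finset.Icc 1 n, ((x.choose (w + t) : ℕ) : ℝ) * ((n.choose t : ℕ) : ℝ) := by
          push_cast; ring_nf
      _ ≤ ∑ t ∈ Finset.Icc 1 n, ((x.choose w : ℕ) : ℝ) * q ^ t * ((n.choose t : ℕ) : ℝ) := by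
          apply Finset.sum_le_sum
          intro t _
          have h1 := hchoose t
          have h2 : (0:ℝ) ≤ ((n.choose t : ℕ) : ℝ) := by positivity
          nlinarith
      _ ≤ ∑ t ∈ Finset.range (n + 1), ((x.choose w : ℕ) : ℝ) * q ^ t * ((n.choose t : ℕ) : ℝ) := by
          apply Finset.sum_le_sum_of_subset_of_nonneg
          · intro t ht
            rw [Finset.mem_Icc] at ht
            rw [Finset.mem_range]
            omega
          · intro t _ _
            positivity
      _ = ((x.choose w : ℕ) : ℝ) * (q + 1) ^ n := by
          rw [add_pow]
          rw [Finset.mul_sum]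
          apply Finset.sum_congr rfl
          intro t _
          simp only [one_pow, mul_one]
          ring
      _ ≤ (2 / p) ^ n * (x.choose w) := by
          rw [hqp]
          rw [mul_comm]
          apply mul_le_mul_of_nonneg_right _ hCpos.le
          apply pow_le_pow_left₀ (by positivity)
          rw [div_le_div_iff₀ hp₀ hp₀]
          linarith [hp₀]
  -- STEP 3: Markov's inequality
  set G := X.powerset.filter (fun W => W.card = w ∧
        δ * F.card ≤ ((F.filter (fun S =>
          ¬ ∃ S' ∈ F, S' \ W ⊆ S \ W ∧ (S' \ W).card ≤ d)).card : ℝ)) with hG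
  have hGA : G ⊆ A := by
    intro W hW
    rw [hG, Finset.mem_filter, Finset.mem_powerset] at hW
    rw [hA, Finset.mem_powersetCard]
    exact ⟨hW.1, hW.2.1⟩
  have hmarkov : (G.card : ℝ) * (δ * F.card) ≤ ((∑ W ∈ A, (badF W).card : ℕ) : ℝ) := by
    calc (G.card : ℝ) * (δ * F.card) = ∑ _W ∈ G, δ * F.card := by
          rw [Finset.sum_const, nsmul_eq_mul]
      _ ≤ ∑ W ∈ G, ((badF W).card : ℝ) := by
          apply Finset.sum_le_sum
          intro W hW
          rw [hG, Finset.mem_filter] at hW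
          exact hW.2.2
      _ ≤ ∑ W ∈ A, ((badF W).card : ℝ) := by
          apply Finset.sum_le_sum_of_subset_of_nonneg hGA
          intro W _ _
          positivity
      _ = ((∑ W ∈ A, (badF W).card : ℕ) : ℝ) := by push_cast; ring
  rw [div_le_div_iff₀ hCpos hδF]
  calc (G.card : ℝ) * (δ * F.card)
      ≤ ((∑ W ∈ A, (badF W).card : ℕ) : ℝ) := hmarkov
    _ ≤ (2 / p) ^ n * (x.choose w) := hkey
end
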